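/- arXiv:1403.0359 — 6 statements merged into one kernel-verified Lean document; each statement's English description precedes it below -/
import Mathlib

section
/- Let G be a claw-free graph and let I and J be independent sets in G. Then every connected component of the induced subgraph G[I △ J] (on the symmetric difference of I and J) is either a path or a cycle of even length. -/
/-!
Inside `G[I △ J]` a vertex of `I \ J` has all its neighbours in the independent set `J`, and
symmetrically, so claw-freeness bounds every degree by 2, while membership in `I` is a proper
2-colouring. A finite connected graph of maximum degree at most 2 is a path or a cycle: a longest
path covers every vertex, because a vertex adjacent to it either extends it at an end or would be a
third neighbour of an inner vertex, and the only edge besides the path edges can join its two ends.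
A 2-colourable cycle has even length.
-/

open SimpleGraph

/-- A graph is claw-free if no vertex has three pairwise nonadjacent neighbors. -/
def ClawFree {V : Type} (G : SimpleGraph V) : Prop :=
  ¬ ∃ v a b c : V, G.Adj v a ∧ G.Adj v b ∧ G.Adj v c ∧
    a ≠ b ∧ a ≠ c ∧ b ≠ c ∧ ¬G.Adj a b ∧ ¬G.Adj a c ∧ ¬G.Adj b c

/-- `s` is an independent set of `G`. -/
def Indep {V : Type} (G : SimpleGraph V) (s : Set V) : Prop :=
  ∀ u ∈ s, ∀ v ∈ s, ¬G.Adj u v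

/-- Token sliding step between independent sets. -/
def TSStep {V : Type} (G : SimpleGraph V) (I J : Set V) : Prop :=
  Indep G I ∧ Indep G J ∧ ∃ u v : V, G.Adj u v ∧ I \ J = {u} ∧ J \ I = {v}

/-- Token jumping step between independent sets. -/
def TJStep {V : Type} (G : SimpleGraph V) (I J : Set V) : Prop :=
  Indep G I ∧ Indep G J ∧ ∃ u v : V, I \ J = {u} ∧ J \ I = {v}

/-- Reachability under token sliding. -/
def TSReach {V : Type} (G : SimpleGraph V) : Set V → Set V → Prop :=
  Relation.ReflTransGen (TSStep G)

/-- Reachability under token jumping. -/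
def TJReach {V : Type} (G : SimpleGraph V) : Set V → Set V → Prop :=
  Relation.ReflTransGen (TJStep G)

/-- The neighbors of `v` inside the set `B`. -/
def nbrsIn {V : Type} (G : SimpleGraph V) (B : Set V) (v : V) : Set V :=
  {u ∈ B | G.Adj v u}

/-- `Nset G B i` is the set `N_i(B)` of vertices outside `B` with exactly `i` neighbors in `B`. -/
def Nset {V : Type} (G : SimpleGraph V) (B : Set V) (i : ℕ) : Set V :=
  {v | v ∉ B ∧ (nbrsIn G B v).ncard = i}

/-- The neighborhood of a set. -/
def Nbhd {V : Type} (G : SimpleGraph V) (S : Set V) : Set V :=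
  {w | ∃ u ∈ S, G.Adj w u}

/-- An `I`-bad cycle: a chordless `I`-alternating cycle `c 0, c 1, …, c (2n-1), c 0`
with `c j ∈ I` exactly for even `j`. -/
def IsBadCycle {V : Type} (G : SimpleGraph V) (I : Set V) (n : ℕ) (c : ZMod (2*n) → V) : Prop :=
  2 ≤ n ∧ Function.Injective c ∧
  (∀ j : ZMod (2*n), G.Adj (c j) (c (j + 1))) ∧
  (∀ i j : ZMod (2*n), G.Adj (c i) (c j) → j = i + 1 ∨ i = j + 1) ∧
  (∀ j : ZMod (2*n), c j ∈ I ↔ Even (ZMod.val j))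

/-- The part `A = V(C) ∩ I` of the `I`-bipartition of a bad cycle. -/
def cycA {V : Type} {n : ℕ} (c : ZMod (2*n) → V) : Set V :=
  c '' {j | Even (ZMod.val j)}

/-- The part `B = V(C) \ I` of the `I`-bipartition of a bad cycle. -/
def cycB {V : Type} {n : ℕ} (c : ZMod (2*n) → V) : Set V :=
  c '' {j | ¬ Even (ZMod.val j)}

/-- The bad cycle `c` is resolvable with respect to `I`. -/
def Resolvable {V : Type} (G : SimpleGraph V) (I : Set V) {n : ℕ} (c : ZMod (2*n) → V) : Prop :=
  ∃ I' : Set V, TSReach G I I' ∧ (G.induce (I' ∪ cycB c)).IsAcyclic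

/-- A vertex is free w.r.t. `I` if it is outside `I` and has at most one neighbor in `I`. -/
def FreeVert {V : Type} (G : SimpleGraph V) (I : Set V) (v : V) : Prop :=
  v ∉ I ∧ (nbrsIn G I v).ncard ≤ 1

/-- An `I`-augmenting path `x 0, x 1, …, x (2k)`: an `I`-alternating chordless path of
length `2k ≥ 2` whose endpoints are free vertices. -/
def IsAugPath {V : Type} (G : SimpleGraph V) (I : Set V) (k : ℕ) (x : Fin (2*k+1) → V) : Prop :=
  1 ≤ k ∧ Function.Injective x ∧
  (∀ j : Fin (2*k), G.Adj (x j.castSucc) (x j.succ)) ∧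
  (∀ i j : Fin (2*k+1), G.Adj (x i) (x j) → i.val + 1 = j.val ∨ j.val + 1 = i.val) ∧
  (∀ j : Fin (2*k+1), x j ∈ I ↔ Odd j.val) ∧
  FreeVert G I (x 0) ∧ FreeVert G I (x (Fin.last (2*k)))

namespace SimpleGraph

section MaxDegreeTwo

variable {W : Type*} {H : SimpleGraph W}

lemma eq_or_eq_of_adj_of_ncard_neighborSet_le_two [Finite W] {v a b c : W}
    (hv : (H.neighborSet v).ncard ≤ 2) (ha : H.Adj v a) (hb : H.Adj v b) (hab : a ≠ b)
    (hc : H.Adj v c) : c = a ∨ c = b := by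
  by_contra! h
  have : 2 < (H.neighborSet v).ncard :=
    (Set.two_lt_ncard_iff (Set.toFinite _)).mpr ⟨a, b, c, ha, hb, hc, hab, h.1.symm, h.2.symm⟩
  omega

variable {l : List W}

lemma eq_getElem_pred_or_succ_of_adj_getElem [Finite W] (hdeg : ∀ v, (H.neighborSet v).ncard ≤ 2)
    (hl : l.Nodup) (hc : l.IsChain H.Adj) {i : ℕ} (hi₀ : 0 < i) (hi : i + 1 < l.length)
    {y : W} (hy : H.Adj l[i] y) : y = l[i - 1] ∨ y = l[i + 1] := by
  have hpred : H.Adj l[i] l[i - 1] := by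
    have := hc.getElem (i - 1) (by omega)
    simp only [Nat.sub_add_cancel hi₀] at this
    exact this.symm
  refine eq_or_eq_of_adj_of_ncard_neighborSet_le_two (hdeg _) hpred (hc.getElem i hi) ?_ hy
  rw [Ne, hl.getElem_inj_iff]
  omega

lemma exists_longer_nodup_isChain_of_adj [Finite W] (hdeg : ∀ v, (H.neighborSet v).ncard ≤ 2)
    (hl : l.Nodup) (hc : l.IsChain H.Adj) {i : ℕ} (hi : i < l.length) {y : W} (hy : y ∉ l)
    (hadj : H.Adj l[i] y) :
    ∃ l' : List W, l'.Nodup ∧ l'.IsChain H.Adj ∧ l.length < l'.length := by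
  rcases Nat.eq_zero_or_pos i with rfl | hi₀
  · refine ⟨y :: l, List.nodup_cons.mpr ⟨hy, hl⟩, hc.cons ?_, by simp⟩
    intro z hz
    rw [List.head?_eq_getElem?, List.getElem?_eq_getElem hi, Option.mem_some_iff] at hz
    exact hz ▸ hadj.symm
  by_cases hlast : i + 1 = l.length
  · refine ⟨l ++ [y], ?_, List.isChain_append.mpr ⟨hc, List.isChain_singleton y, ?_⟩, by simp⟩
    · refine List.nodup_append.mpr ⟨hl, List.nodup_singleton y, ?_⟩
      simpa using fun z hz (h : z = y) => hy (h ▸ hz)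
    · intro x hx z hz
      rw [List.getLast?_eq_getElem?, List.getElem?_eq_getElem (by omega), Option.mem_some_iff] at hx
      simp only [List.head?_cons, Option.mem_some_iff] at hz
      subst hx hz
      simpa [← hlast] using hadj
  · rcases eq_getElem_pred_or_succ_of_adj_getElem hdeg hl hc hi₀ (by omega) hadj with h | h <;>
      exact (hy (h ▸ List.getElem_mem _)).elim

lemma Connected.exists_nodup_isChain_forall_mem [Finite W] (hconn : H.Connected)
    (hdeg : ∀ v, (H.neighborSet v).ncard ≤ 2) :
    ∃ l : List W, l.Nodup ∧ l.IsChain H.Adj ∧ ∀ x, x ∈ l := by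
  have hfin : {l : List W | l.Nodup ∧ l.IsChain H.Adj}.Finite :=
    (List.finite_length_le W (Nat.card W)).subset fun l hl => hl.1.length_le_natCard
  obtain ⟨l, ⟨hl, hc⟩, hmax⟩ := Set.exists_max_image _ List.length hfin ⟨[], by simp⟩
  have hclosed : ∀ x ∈ l, ∀ y, H.Adj x y → y ∈ l := by
    intro x hx y hxy
    by_contra hy
    obtain ⟨i, hi, rfl⟩ := List.getElem_of_mem hx
    obtain ⟨l', hl', hc', hlt⟩ := exists_longer_nodup_isChain_of_adj hdeg hl hc hi hy hxy
    exact (hmax l' ⟨hl', hc'⟩).not_gt hlt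
  obtain ⟨v⟩ := hconn.nonempty
  obtain ⟨u, hu⟩ : ∃ u, u ∈ l := by
    refine List.exists_mem_of_ne_nil l fun hnil => ?_
    have := hmax [v] ⟨List.nodup_singleton v, List.isChain_singleton v⟩
    simp [hnil] at this
  refine ⟨l, hl, hc, fun x => ?_⟩
  by_contra hx
  obtain ⟨d, -, hd, hd'⟩ := (hconn.preconnected u x).some.exists_boundary_dart {z | z ∈ l} hu hx
  exact hd' (hclosed _ hd _ d.adj)

lemma pred_eq_or_eq_succ_of_adj_getElem [Finite W] (hdeg : ∀ v, (H.neighborSet v).ncard ≤ 2)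
    (hl : l.Nodup) (hc : l.IsChain H.Adj) {i j : ℕ} (hi₀ : 0 < i) (hi : i + 1 < l.length)
    (hj : j < l.length) (h : H.Adj l[i] l[j]) : j + 1 = i ∨ j = i + 1 := by
  rcases eq_getElem_pred_or_succ_of_adj_getElem hdeg hl hc hi₀ hi h with h' | h' <;>
    rw [hl.getElem_inj_iff] at h' <;> omega

lemma adj_getElem_consecutive_or_ends [Finite W] (hdeg : ∀ v, (H.neighborSet v).ncard ≤ 2)
    (hl : l.Nodup) (hc : l.IsChain H.Adj) {i j : ℕ} (hi : i < l.length) (hj : j < l.length)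
    (h : H.Adj l[i] l[j]) :
    i + 1 = j ∨ j + 1 = i ∨ (i = 0 ∧ j + 1 = l.length) ∨ (j = 0 ∧ i + 1 = l.length) := by
  have hij : i ≠ j := fun hij => h.ne (by simp only [hij])
  by_cases hi' : 0 < i ∧ i + 1 < l.length
  · have := pred_eq_or_eq_succ_of_adj_getElem hdeg hl hc hi'.1 hi'.2 hj h
    omega
  by_cases hj' : 0 < j ∧ j + 1 < l.length
  · have := pred_eq_or_eq_succ_of_adj_getElem hdeg hl hc hj'.1 hj'.2 hi h.symm
    omega
  omega

lemma cycleGraph_adj_iff_val {n : ℕ} (hn : 2 ≤ n) {u v : Fin n} :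
    (cycleGraph n).Adj u v ↔ u.val + 1 = v.val ∨ v.val + 1 = u.val ∨
      (u.val = 0 ∧ v.val + 1 = n) ∨ (v.val = 0 ∧ u.val + 1 = n) := by
  have huv := Fin.coe_sub_iff_le (a := u) (b := v)
  have huv' := Fin.coe_sub_iff_lt (a := u) (b := v)
  have hvu := Fin.coe_sub_iff_le (a := v) (b := u)
  have hvu' := Fin.coe_sub_iff_lt (a := v) (b := u)
  rw [Fin.lt_def] at huv' hvu'
  rw [cycleGraph_adj']
  omega

theorem Connected.exists_iso_pathGraph_or_cycleGraph [Finite W] (hconn : H.Connected)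
    (hdeg : ∀ v, (H.neighborSet v).ncard ≤ 2) :
    ∃ n, Nonempty (H ≃g pathGraph n) ∨ 3 ≤ n ∧ Nonempty (H ≃g cycleGraph n) := by
  obtain ⟨l, hl, hc, hall⟩ := hconn.exists_nodup_isChain_forall_mem hdeg
  let e : Fin l.length ≃ W := Equiv.ofBijective l.get
    ⟨List.nodup_iff_injective_get.mp hl, fun x => List.mem_iff_get.mp (hall x)⟩
  have hends : ∀ {i j : Fin l.length}, H.Adj (e i) (e j) →
      i.val + 1 = j.val ∨ j.val + 1 = i.val ∨ (i.val = 0 ∧ j.val + 1 = l.length) ∨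
        (j.val = 0 ∧ i.val + 1 = l.length) :=
    adj_getElem_consecutive_or_ends hdeg hl hc _ _
  have hsucc : ∀ {i j : Fin l.length}, i.val + 1 = j.val → H.Adj (e i) (e j) := by
    rintro ⟨i, hi⟩ ⟨j, hj⟩ (rfl : i + 1 = j)
    exact hc.getElem i hj
  refine ⟨l.length, ?_⟩
  by_cases hclosed : 3 ≤ l.length ∧
      ∃ i₀ j₀ : Fin l.length, i₀.val = 0 ∧ j₀.val + 1 = l.length ∧ H.Adj (e i₀) (e j₀)
  · obtain ⟨hn, i₀, j₀, hi₀, hj₀, hclosed⟩ := hclosed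
    have hlast : ∀ {i j : Fin l.length}, i.val = 0 → j.val + 1 = l.length → H.Adj (e i) (e j) := by
      intro i j hi hj
      rwa [show i = i₀ by omega, show j = j₀ by omega]
    refine Or.inr ⟨hn, ⟨(RelIso.mk e fun {i j} => ?_).symm⟩⟩
    rw [cycleGraph_adj_iff_val (by omega)]
    refine ⟨hends, ?_⟩
    rintro (h | h | ⟨hi, hj⟩ | ⟨hj, hi⟩)
    · exact hsucc h
    · exact (hsucc h).symm
    · exact hlast hi hj
    · exact (hlast hj hi).symm
  · refine Or.inl ⟨(RelIso.mk e fun {i j} => ?_).symm⟩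
    rw [pathGraph_adj]
    refine ⟨fun h => ?_, ?_⟩
    · have hij : i.val ≠ j.val := fun hij => h.ne (congrArg e (Fin.ext hij))
      rcases hends h with h | h | ⟨hi, hj⟩ | ⟨hj, hi⟩
      · exact Or.inl h
      · exact Or.inr h
      · by_cases hn : 3 ≤ l.length
        · exact (hclosed ⟨hn, i, j, hi, hj, h⟩).elim
        · omega
      · by_cases hn : 3 ≤ l.length
        · exact (hclosed ⟨hn, j, i, hj, hi, h.symm⟩).elim
        · omega
    · rintro (h | h)
      · exact hsucc h
      · exact (hsucc h).symm

end MaxDegreeTwo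

lemma Embedding.ncard_neighborSet_le {W V' : Type*} {H : SimpleGraph W} {G' : SimpleGraph V'}
    [Finite V'] (f : H ↪g G') (v : W) :
    (H.neighborSet v).ncard ≤ (G'.neighborSet (f v)).ncard :=
  Set.ncard_le_ncard_of_injOn f (fun _ hw => f.map_adj_iff.mpr hw) f.injective.injOn

lemma even_of_colorable_cycleGraph {n : ℕ} (hn : 2 ≤ n) (h : (cycleGraph n).Colorable 2) :
    Even n := by
  by_contra hodd
  have h3 := chromaticNumber_cycleGraph_of_odd n hn (Nat.not_even_iff_odd.mp hodd)
  have h2 := h.chromaticNumber_le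
  rw [h3] at h2
  norm_num at h2

end SimpleGraph

section SymmDiff

variable {V : Type} {G : SimpleGraph V}

lemma ClawFree.ncard_neighborSet_inter_le_two [Finite V] (hcf : ClawFree G) {s : Set V}
    (hs : Indep G s) (v : V) : (G.neighborSet v ∩ s).ncard ≤ 2 := by
  by_contra! h
  obtain ⟨a, b, c, ha, hb, hc, hab, hac, hbc⟩ := (Set.two_lt_ncard_iff (Set.toFinite _)).mp h
  exact hcf ⟨v, a, b, c, ha.1, hb.1, hc.1, hab, hac, hbc,
    hs _ ha.2 _ hb.2, hs _ ha.2 _ hc.2, hs _ hb.2 _ hc.2⟩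

lemma Indep.mem_of_adj_of_mem_symmDiff {I J : Set V} (hI : Indep G I) {u v : V} (hu : u ∈ I)
    (hv : v ∈ symmDiff I J) (huv : G.Adj u v) : v ∈ J := by
  rcases Set.mem_symmDiff.mp hv with ⟨hvI, -⟩ | ⟨hvJ, -⟩
  · exact (hI u hu v hvI huv).elim
  · exact hvJ

lemma ClawFree.ncard_neighborSet_induce_symmDiff_le_two [Finite V] (hcf : ClawFree G) {I J : Set V}
    (hI : Indep G I) (hJ : Indep G J) (v : ↥(symmDiff I J)) :
    ((G.induce (symmDiff I J)).neighborSet v).ncard ≤ 2 := by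
  have hle : ∀ {T : Set V}, Indep G T → (∀ u ∈ symmDiff I J, G.Adj v u → u ∈ T) →
      ((G.induce (symmDiff I J)).neighborSet v).ncard ≤ 2 := fun {T} hT hnbr =>
    (Set.ncard_le_ncard_of_injOn (t := G.neighborSet v ∩ T) Subtype.val
      (fun u (hu : G.Adj v.1 u.1) => ⟨hu, hnbr u u.2 hu⟩) Subtype.val_injective.injOn).trans
      (hcf.ncard_neighborSet_inter_le_two hT v)
  rcases Set.mem_symmDiff.mp v.2 with ⟨hvI, -⟩ | ⟨hvJ, -⟩
  · exact hle hJ fun u hu => hI.mem_of_adj_of_mem_symmDiff hvI hu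
  · exact hle hI fun u hu =>
      hJ.mem_of_adj_of_mem_symmDiff hvJ (by rwa [symmDiff_comm] at hu)

lemma Indep.colorable_induce_symmDiff {I J : Set V} (hI : Indep G I) (hJ : Indep G J) :
    (G.induce (symmDiff I J)).Colorable 2 := by
  classical
  refine Fintype.card_bool ▸ (Coloring.mk (fun v => decide (v.1 ∈ I)) fun {u v} huv => ?_).colorable
  simp only [ne_eq, decide_eq_decide]
  intro h
  by_cases huI : u.1 ∈ I
  · exact hI _ huI _ (h.mp huI) huv
  · have mem_J : ∀ w : ↥(symmDiff I J), w.1 ∉ I → w.1 ∈ J := fun w hw =>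
      ((Set.mem_symmDiff.mp w.2).resolve_left fun h' => hw h'.1).1
    exact hJ _ (mem_J u huI) _ (mem_J v (mt h.mpr huI)) huv

end SymmDiff

theorem stmt_0_general {V : Type} [Fintype V] (G : SimpleGraph V)
    (hcf : ClawFree G) (I J : Set V) (hI : Indep G I) (hJ : Indep G J)
    (comp : (G.induce (symmDiff I J)).ConnectedComponent) :
    (∃ m : ℕ, 1 ≤ m ∧
      Nonempty (((G.induce (symmDiff I J)).induce comp.supp) ≃g pathGraph m)) ∨
    (∃ t : ℕ, 2 ≤ t ∧
      Nonempty (((G.induce (symmDiff I J)).induce comp.supp) ≃g cycleGraph (2*t))) := by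
  have hconn : ((G.induce (symmDiff I J)).induce comp.supp).Connected :=
    comp.connected_toSimpleGraph
  have hdeg : ∀ v, (((G.induce (symmDiff I J)).induce comp.supp).neighborSet v).ncard ≤ 2 :=
    fun v => ((Embedding.induce _).ncard_neighborSet_le v).trans
      (hcf.ncard_neighborSet_induce_symmDiff_le_two hI hJ _)
  obtain ⟨n, ⟨⟨e⟩⟩ | ⟨hn, ⟨e⟩⟩⟩ := hconn.exists_iso_pathGraph_or_cycleGraph hdeg
  · obtain ⟨v⟩ := hconn.nonempty
    exact Or.inl ⟨n, (e v).pos, ⟨e⟩⟩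
  · have hcol : (cycleGraph n).Colorable 2 :=
      ((hI.colorable_induce_symmDiff hJ).of_hom (Embedding.induce _).toHom).of_hom e.symm.toHom
    obtain ⟨t, rfl⟩ := even_iff_two_dvd.mp (even_of_colorable_cycleGraph (by omega) hcol)
    exact Or.inr ⟨t, by omega, ⟨e⟩⟩

/-- Every connected component of `G[I △ J]` is a path or an even cycle. -/
theorem stmt_0 {V : Type} [Fintype V] [DecidableEq V] (G : SimpleGraph V)
    (hcf : ClawFree G) (I J : Set V) (hI : Indep G I) (hJ : Indep G J)
    (comp : (G.induce (symmDiff I J)).ConnectedComponent) :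
    (∃ m : ℕ, 1 ≤ m ∧
      Nonempty (((G.induce (symmDiff I J)).induce comp.supp) ≃g pathGraph m)) ∨
    (∃ t : ℕ, 2 ≤ t ∧
      Nonempty (((G.induce (symmDiff I J)).induce comp.supp) ≃g cycleGraph (2*t))) :=
  stmt_0_general G hcf I J hI hJ comp
end

section
/- Let G be a connected claw-free graph and let I and J be independent sets in G with |I| = |J|. If the induced subgraph G[I △ J] contains no cycles, then there is a TS-sequence from I to J, i.e., I and J are connected in the token sliding graph TS_k(G) where k = |I|. -/
open SimpleGraph

/-!
Induct on `|I △ J|`. The forest `G[I △ J]` has a vertex `u` with at most one neighbour in it,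
say `u ∈ J \ I`; since `J` is independent, every neighbour of `u` in `I` lies in `I △ J`, so `u`
has at most one neighbour in `I`. If it has one, slide it onto `u`. If it has none, `u` is free
for `I`, and in a connected claw-free graph any token `a` can be brought to a free vertex `b`, by
induction on the distance from `b` to `a`. Let `x` follow `b` on a geodesic to `a`. If `x` sees
no token, bring `a` to `x` and slide it on to `b`. Otherwise `x` sees a single token `t` (two
would form a claw with `b`), which slides via `x` onto `b`; the vertex `t` is now free, and
claw-freeness at `x` puts it closer to `a` than `b` was.
-/

section

variable {V : Type} {G : SimpleGraph V}

lemma ClawFree.eq_or_adj (hcf : ClawFree G) {v a b c : V}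
    (ha : G.Adj v a) (hb : G.Adj v b) (hc : G.Adj v c) (hab : a ≠ b) (hac : a ≠ c)
    (hnab : ¬G.Adj a b) (hnac : ¬G.Adj a c) : b = c ∨ G.Adj b c := by
  by_contra! h
  exact hcf ⟨v, a, b, c, ha, hb, hc, hab, hac, h.1, hnab, hnac, h.2⟩

lemma SimpleGraph.Reachable.exists_adj_dist_lt {u v : V} (hr : G.Reachable u v)
    (hne : u ≠ v) : ∃ w, G.Adj u w ∧ G.dist w v < G.dist u v := by
  obtain ⟨p, hp⟩ := hr.exists_walk_length_eq_dist
  cases p with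
  | nil => exact absurd rfl hne
  | cons h q =>
    refine ⟨_, h, ?_⟩
    have := dist_le q
    rw [Walk.length_cons] at hp
    omega

lemma SimpleGraph.Adj.dist_le_dist_add_one {u w : V} (h : G.Adj u w) (v : V) :
    G.dist u v ≤ G.dist w v + 1 := by
  have := h.reachable.dist_triangle_left v
  rw [dist_eq_one_iff_adj.mpr h] at this
  omega

lemma SimpleGraph.IsAcyclic.exists_subsingleton_neighborSet {W : Type} [Finite W] [Nonempty W]
    {H : SimpleGraph W} (hH : H.IsAcyclic) : ∃ u, (H.neighborSet u).Subsingleton := by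
  obtain ⟨u, v, p, hp, hmax⟩ := Walk.exists_isPath_forall_isPath_length_le_length H
  refine ⟨u, fun w hw w' hw' => ?_⟩
  -- a neighbour off a longest path would extend it, so every neighbour is its second vertex
  have hsnd : ∀ x, H.Adj u x → x = p.snd := fun x hx =>
    hH.eq_snd_of_adj_start hp hx <| by
      by_contra hxp
      have := hmax _ _ _ (hp.cons hxp (h := hx.symm))
      rw [Walk.length_cons] at this
      omega
  exact (hsnd w hw).trans (hsnd w' hw').symm

lemma exists_subsingleton_nbrsIn_of_isAcyclic [Finite V] {S : Set V} (hS : S.Nonempty)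
    (hacyc : (G.induce S).IsAcyclic) : ∃ u ∈ S, (nbrsIn G S u).Subsingleton := by
  have := hS.to_subtype
  obtain ⟨⟨u, hu⟩, hsub⟩ := hacyc.exists_subsingleton_neighborSet
  exact ⟨u, hu, fun x hx y hy =>
    congrArg Subtype.val (hsub (x := ⟨x, hx.1⟩) hx.2 (y := ⟨y, hy.1⟩) hy.2)⟩

lemma TSStep.symm {I J : Set V} (h : TSStep G I J) : TSStep G J I := by
  obtain ⟨hI, hJ, u, v, huv, hIJ, hJI⟩ := h
  exact ⟨hJ, hI, v, u, huv.symm, hJI, hIJ⟩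

lemma TSReach.symm {I J : Set V} (h : TSReach G I J) : TSReach G J I := by
  induction h with
  | refl => exact .refl
  | tail _ hs ih => exact .head hs.symm ih

lemma TSReach.indep {I J : Set V} (h : TSReach G I J) (hI : Indep G I) : Indep G J := by
  induction h with
  | refl => exact hI
  | tail _ hs => exact hs.2.1

lemma Indep.insert_diff {I : Set V} {u v : V} (hI : Indep G I)
    (hv : ∀ w ∈ I, G.Adj v w → w = u) : Indep G (insert v (I \ {u})) := by
  rintro x (rfl | ⟨hx, hxu⟩) y (rfl | ⟨hy, hyu⟩) hxy
  · exact G.irrefl hxy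
  · exact hyu (hv y hy hxy)
  · exact hxu (hv x hx hxy.symm)
  · exact hI x hx y hy hxy

lemma Indep.tsStep_insert_diff {I : Set V} {u v : V} (hI : Indep G I) (hu : u ∈ I) (hv : v ∉ I)
    (huv : G.Adj u v) (hvI : ∀ w ∈ I, G.Adj v w → w = u) :
    TSStep G I (insert v (I \ {u})) := by
  refine ⟨hI, hI.insert_diff hvI, u, v, huv, ?_, ?_⟩ <;> ext w <;> simp only [Set.mem_sdiff,
    Set.mem_insert_iff, Set.mem_singleton_iff] <;> grind

lemma TSReach.insert_diff_of_adj {I : Set V} {a x b : V} (h : TSReach G I (insert x (I \ {a})))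
    (hI : Indep G I) (hx : x ∉ I) (hb : b ∉ I) (hxb : G.Adj x b)
    (hfree : ∀ t ∈ I, ¬G.Adj b t) : TSReach G I (insert b (I \ {a})) := by
  have hbx : b ≠ x := hxb.ne.symm
  have step := (h.indep hI).tsStep_insert_diff (Set.mem_insert x _) (by simp [hbx, hb]) hxb
    (by rintro w (rfl | ⟨hw, -⟩) hbw; exacts [rfl, absurd hbw (hfree w hw)])
  have hset : insert b (insert x (I \ {a}) \ {x}) = insert b (I \ {a}) := by
    ext w
    simp only [Set.mem_sdiff, Set.mem_insert_iff, Set.mem_singleton_iff]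
    grind
  exact hset ▸ h.tail step

theorem tsReach_insert_diff_of_free (hconn : G.Connected) (hcf : ClawFree G) {I : Set V}
    (hI : Indep G I) {a b : V} (ha : a ∈ I) (hb : b ∉ I)
    (hfree : ∀ t ∈ I, ¬G.Adj b t) : TSReach G I (insert b (I \ {a})) := by
  induction hd : G.dist b a using Nat.strong_induction_on generalizing I a b with
  | _ d ih =>
  have hba : b ≠ a := fun h => hb (h ▸ ha)
  obtain ⟨x, hbx, hxd⟩ := (hconn b a).exists_adj_dist_lt hba
  have hx : x ∉ I := fun hx => hfree x hx hbx
  by_cases hxI : ∃ t ∈ I, G.Adj x t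
  swap
  · push Not at hxI
    exact (ih _ (by omega) hI ha hx hxI rfl).insert_diff_of_adj hI hx hb hbx.symm hfree
  obtain ⟨t, ht, hxt⟩ := hxI
  have hbt : b ≠ t := fun h => hb (h ▸ ht)
  have ht_uniq : ∀ s ∈ I, G.Adj x s → s = t := fun s hs hxs =>
    (hcf.eq_or_adj hbx.symm hxs hxt (fun h => hb (h ▸ hs)) hbt (hfree s hs)
      (hfree t ht)).resolve_right (hI s hs t ht)
  have hreach : TSReach G I (insert b (I \ {t})) :=
    TSReach.insert_diff_of_adj (.single (hI.tsStep_insert_diff ht hx hxt.symm ht_uniq))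
      hI hx hb hbx.symm hfree
  obtain rfl | hta := eq_or_ne t a
  · exact hreach
  have hxa : x ≠ a := fun h => hfree a ha (h ▸ hbx)
  obtain ⟨y, hxy, hyd⟩ := (hconn x a).exists_adj_dist_lt hxa
  have hby : b ≠ y := by rintro rfl; omega
  have hnby : ¬G.Adj b y := fun h => by have := h.dist_le_dist_add_one a; omega
  -- `t` is `y` or adjacent to it, otherwise `b, t, y` is a claw at `x`
  have htd : G.dist t a < d := by
    rcases hcf.eq_or_adj hbx.symm hxt hxy hbt hby (hfree t ht) hnby with rfl | hty
    · omega
    · have := hty.dist_le_dist_add_one a; omega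
  have hrest := ih _ htd (hreach.indep hI) (a := a) (b := t) (by simp [ha, hta.symm])
    (by simp [hbt.symm])
    (by rintro s (rfl | ⟨hs, -⟩) hts; exacts [hfree t ht hts.symm, hI t ht s hs hts]) rfl
  have hset : insert t (insert b (I \ {t}) \ {a}) = insert b (I \ {a}) := by
    ext w
    simp only [Set.mem_sdiff, Set.mem_insert_iff, Set.mem_singleton_iff]
    grind
  exact hset ▸ hreach.trans hrest

lemma exists_tsReach_insert_diff (hconn : G.Connected) (hcf : ClawFree G) {I J : Set V}
    (hI : Indep G I) (hJ : Indep G J) (hIJ : (I \ J).Nonempty) {b : V} (hb : b ∈ J \ I)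
    (hnb : (nbrsIn G I b).Subsingleton) :
    ∃ a ∈ I \ J, TSReach G I (insert b (I \ {a})) := by
  obtain hempty | ⟨a, ha, hba⟩ := (nbrsIn G I b).eq_empty_or_nonempty
  · obtain ⟨a, ha⟩ := hIJ
    refine ⟨a, ha, tsReach_insert_diff_of_free hconn hcf hI ha.1 hb.2 fun t ht hbt => ?_⟩
    exact hempty.subset ⟨ht, hbt⟩
  · exact ⟨a, ⟨ha, fun haJ => hJ b hb.1 a haJ hba⟩, .single <|
      hI.tsStep_insert_diff ha hb.2 hba.symm fun w hw hbw => hnb ⟨hw, hbw⟩ ⟨ha, hba⟩⟩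

lemma nbrsIn_subset_nbrsIn_symmDiff {I J : Set V} (hJ : Indep G J) {b : V} (hb : b ∈ J) :
    nbrsIn G I b ⊆ nbrsIn G (symmDiff I J) b :=
  fun a ⟨ha, hba⟩ => ⟨Or.inl ⟨ha, fun haJ => hJ b hb a haJ hba⟩, hba⟩

lemma exists_exchange [Finite V] (hconn : G.Connected) (hcf : ClawFree G) {I J : Set V}
    (hI : Indep G I) (hJ : Indep G J) (hIJ : (I \ J).Nonempty) (hJI : (J \ I).Nonempty)
    (hacyc : (G.induce (symmDiff I J)).IsAcyclic) :
    ∃ a ∈ I \ J, ∃ b ∈ J \ I,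
      TSReach G I (insert b (I \ {a})) ∨ TSReach G J (insert a (J \ {b})) := by
  obtain ⟨u, hu, hleaf⟩ :=
    exists_subsingleton_nbrsIn_of_isAcyclic (S := symmDiff I J) (hIJ.mono le_sup_left) hacyc
  rcases hu with hu | hu
  · obtain ⟨b, hb, hreach⟩ := exists_tsReach_insert_diff hconn hcf hJ hI hJI hu
      (hleaf.anti (symmDiff_comm I J ▸ nbrsIn_subset_nbrsIn_symmDiff hI hu.1))
    exact ⟨u, hu, b, hb, .inr hreach⟩
  · obtain ⟨a, ha, hreach⟩ := exists_tsReach_insert_diff hconn hcf hI hJ hIJ hu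
      (hleaf.anti (nbrsIn_subset_nbrsIn_symmDiff hJ hu.1))
    exact ⟨a, ha, u, hu, .inl hreach⟩

lemma symmDiff_insert_diff_ssubset {I J : Set V} {a b : V} (ha : a ∈ I \ J)
    (hb : b ∈ J \ I) : symmDiff (insert b (I \ {a})) J ⊂ symmDiff I J := by
  refine ⟨fun w hw => ?_, fun h => ?_⟩
  · simp only [Set.mem_symmDiff, Set.mem_insert_iff, Set.mem_sdiff,
      Set.mem_singleton_iff] at hw ⊢
    grind
  · have := h (Or.inl ha)
    simp only [Set.mem_symmDiff, Set.mem_insert_iff, Set.mem_sdiff, Set.mem_singleton_iff] at this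
    grind

lemma diff_nonempty_of_ncard_eq [Finite V] {I J : Set V} (hne : I ≠ J)
    (h : I.ncard = J.ncard) : (I \ J).Nonempty := by
  rw [Set.nonempty_iff_ne_empty, Ne, Set.sdiff_eq_empty]
  exact fun hsub => hne (Set.eq_of_subset_of_ncard_le hsub h.ge)

end

theorem stmt_4_general {V : Type} [Fintype V] (G : SimpleGraph V)
    (hconn : G.Connected) (hcf : ClawFree G)
    (I J : Set V) (hI : Indep G I) (hJ : Indep G J) (hcard : I.ncard = J.ncard)
    (hacyc : (G.induce (symmDiff I J)).IsAcyclic) :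
    TSReach G I J := by
  induction hn : (symmDiff I J).ncard using Nat.strong_induction_on generalizing I J with
  | _ n ih =>
  obtain rfl | hne := eq_or_ne I J
  · exact .refl
  obtain ⟨a, ha, b, hb, hreach | hreach⟩ := exists_exchange hconn hcf hI hJ
    (diff_nonempty_of_ncard_eq hne hcard) (diff_nonempty_of_ncard_eq hne.symm hcard.symm) hacyc
  · have hsub := symmDiff_insert_diff_ssubset ha hb
    exact hreach.trans <| ih _ (hn ▸ Set.ncard_lt_ncard hsub) _ J (hreach.indep hI) hJ
      ((Set.ncard_exchange hb.2 ha.1).trans hcard) (hacyc.embedding (G.induceHomOfLE hsub.1))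
      rfl
  · have hsub : symmDiff I (insert a (J \ {b})) ⊂ symmDiff I J := by
      rw [symmDiff_comm, symmDiff_comm I J]; exact symmDiff_insert_diff_ssubset hb ha
    exact (ih _ (hn ▸ Set.ncard_lt_ncard hsub) I _ hI (hreach.indep hJ)
      (hcard.trans (Set.ncard_exchange ha.2 hb.1).symm)
      (hacyc.embedding (G.induceHomOfLE hsub.1)) rfl).trans hreach.symm

/-- If `G[I △ J]` is acyclic in a connected claw-free graph, then `I` and `J` are
connected by a token sliding sequence. -/
theorem stmt_4 {V : Type} [Fintype V] [DecidableEq V] (G : SimpleGraph V)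
    (hconn : G.Connected) (hcf : ClawFree G)
    (I J : Set V) (hI : Indep G I) (hJ : Indep G J) (hcard : I.ncard = J.ncard)
    (hacyc : (G.induce (symmDiff I J)).IsAcyclic) :
    TSReach G I J :=
  stmt_4_general G hconn hcf I J hI hJ hcard hacyc
end

section
/- Let G be a claw-free graph and let A and B be two independent sets such that every connected component of G[A △ B] is a cycle. Then for every vertex v: if v has no neighbor in A and v ∉ A, then v has no neighbor in B and v ∉ B. (Equivalently, N[v] ∩ A = ∅ implies N[v] ∩ B = ∅.) -/
/-!
Every vertex of `A △ B` has two neighbours on its cycle, and for a vertex of `B \ A` both lie in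
`A` because `B` is independent. So `v ∈ B` would give `v` a neighbour in `A`, while a neighbour
`u ∈ B` of `v` would be the centre of a claw with leaves `v` and its two neighbours in `A`.
-/

open SimpleGraph

lemma cycleGraph_exists_adj_adj {n : ℕ} (hn : 3 ≤ n) (v : Fin n) :
    ∃ x y, x ≠ y ∧ (cycleGraph n).Adj v x ∧ (cycleGraph n).Adj v y := by
  obtain ⟨n, rfl⟩ := Nat.exists_eq_add_of_le' hn
  have hdeg : 1 < ((cycleGraph (n + 3)).neighborFinset v).card := by
    rw [card_neighborFinset_eq_degree, cycleGraph_degree_three_le]; norm_num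
  obtain ⟨x, hx, y, hy, hxy⟩ := Finset.one_lt_card.mp hdeg
  exact ⟨x, y, hxy, (mem_neighborFinset _ _ _).mp hx, (mem_neighborFinset _ _ _).mp hy⟩

lemma exists_adj_adj_of_forall_iso_cycleGraph {W : Type*} {H : SimpleGraph W}
    (hcyc : ∀ c : H.ConnectedComponent, ∃ t, 3 ≤ t ∧ Nonempty (H.induce c.supp ≃g cycleGraph t))
    (w : W) : ∃ x y, x ≠ y ∧ H.Adj w x ∧ H.Adj w y := by
  obtain ⟨t, ht, ⟨φ⟩⟩ := hcyc (H.connectedComponentMk w)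
  obtain ⟨x, y, hxy, hx, hy⟩ := cycleGraph_exists_adj_adj ht (φ ⟨w, rfl⟩)
  have hx' := φ.symm.map_adj_iff.mpr hx
  have hy' := φ.symm.map_adj_iff.mpr hy
  rw [RelIso.symm_apply_apply] at hx' hy'
  exact ⟨φ.symm x, φ.symm y, fun h => hxy (φ.symm.injective (Subtype.ext h)), hx', hy'⟩

lemma exists_adj_adj_mem_of_mem_diff {V : Type} {G : SimpleGraph V} {A B : Set V}
    (hB : Indep G B)
    (hcyc : ∀ c : (G.induce (symmDiff A B)).ConnectedComponent,
      ∃ t, 3 ≤ t ∧ Nonempty (((G.induce (symmDiff A B)).induce c.supp) ≃g cycleGraph t))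
    {u : V} (hu : u ∈ B \ A) :
    ∃ x ∈ A, ∃ y ∈ A, x ≠ y ∧ G.Adj u x ∧ G.Adj u y := by
  obtain ⟨x, y, hxy, hx, hy⟩ :=
    exists_adj_adj_of_forall_iso_cycleGraph hcyc ⟨u, Set.mem_symmDiff.mpr (Or.inr hu)⟩
  have mem_A : ∀ z : ↥(symmDiff A B), G.Adj u z → (z : V) ∈ A := fun z hz =>
    (Set.mem_symmDiff.mp z.2).elim And.left fun hzB => absurd hz (hB u hu.1 z hzB.1)
  exact ⟨x, mem_A x hx, y, mem_A y hy, fun h => hxy (Subtype.ext h), hx, hy⟩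

theorem stmt_10_general {V : Type} (G : SimpleGraph V)
    (hcf : ClawFree G) (A B : Set V) (hA : Indep G A) (hB : Indep G B)
    (hcyc : ∀ comp : (G.induce (symmDiff A B)).ConnectedComponent,
      ∃ t : ℕ, 3 ≤ t ∧
        Nonempty (((G.induce (symmDiff A B)).induce comp.supp) ≃g cycleGraph t))
    (v : V) (hv : v ∉ A ∧ ∀ u ∈ A, ¬ G.Adj v u) :
    v ∉ B ∧ ∀ u ∈ B, ¬ G.Adj v u := by
  obtain ⟨hvA, hvN⟩ := hv
  refine ⟨fun hvB => ?_, fun u huB hvu => ?_⟩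
  · obtain ⟨x, hxA, -, -, -, hvx, -⟩ := exists_adj_adj_mem_of_mem_diff hB hcyc ⟨hvB, hvA⟩
    exact hvN x hxA hvx
  · have huA : u ∉ A := fun huA => hvN u huA hvu
    obtain ⟨x, hxA, y, hyA, hxy, hux, huy⟩ := exists_adj_adj_mem_of_mem_diff hB hcyc ⟨huB, huA⟩
    exact hcf ⟨u, v, x, y, hvu.symm, hux, huy, fun h => hvA (h ▸ hxA), fun h => hvA (h ▸ hyA),
      hxy, hvN x hxA, hvN y hyA, hA x hxA y hyA⟩

/-- If every component of `G[A △ B]` is a cycle, then any vertex with no closed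
neighbor in `A` has no closed neighbor in `B`. -/
theorem stmt_10 {V : Type} [Fintype V] [DecidableEq V] (G : SimpleGraph V)
    (hcf : ClawFree G) (A B : Set V) (hA : Indep G A) (hB : Indep G B)
    (hcyc : ∀ comp : (G.induce (symmDiff A B)).ConnectedComponent,
      ∃ t : ℕ, 3 ≤ t ∧
        Nonempty (((G.induce (symmDiff A B)).induce comp.supp) ≃g cycleGraph t))
    (v : V) (hv : v ∉ A ∧ ∀ u ∈ A, ¬ G.Adj v u) :
    v ∉ B ∧ ∀ u ∈ B, ¬ G.Adj v u :=
  stmt_10_general G hcf A B hA hB hcyc v hv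
end

section
/- Let G be a claw-free graph, I and J independent sets such that I is not a dominating set of G and G[I △ J] is a disjoint union of cycles. Then there is a TJ-sequence from I to J. -/
/-!
A vertex `v ∉ I` with no neighbour in `I` can serve as a parking spot for a token. Claw-freeness
makes it harmless: a vertex `b ∈ J \ I` has two nonadjacent neighbours in `I` on its cycle, so an
edge `v b` would create a claw; hence `v` lies outside `J` and has no neighbour in `I ∪ J`. Each
cycle `a₀ b₀ a₁ b₁ … a_{m-1} b_{m-1}` of `G[I △ J]` is then processed in turn: jump `a₀` to `v`,
then `a_{j+1}` to `b_j` for `j < m - 1`, and finally `v` to `b_{m-1}`. Each intermediate set is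
independent, because the only `I`-neighbours of `b_j` are `a_j` and `a_{j+1}` (or `a₀`), which
have already left.
-/

open SimpleGraph

open Function Set

variable {V : Type} {G : SimpleGraph V}

theorem tjStep_insert_sdiff {X : Set V} {u w : V} (hX : Indep G X)
    (hY : Indep G (insert w (X \ {u}))) (hu : u ∈ X) (hw : w ∉ X) :
    TJStep G X (insert w (X \ {u})) := by
  refine ⟨hX, hY, u, w, ?_, ?_⟩ <;> ext x <;>
    simp only [mem_sdiff, mem_insert_iff, mem_singleton_iff] <;> grind

section Rotation

variable {K : Set V} {v : V} {m : ℕ} {a b : Fin m → V}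

/-- The position after jumping `a 0` to `v` and then `a (l + 1)` to `b l` for every `l < j`. -/
def rotationStage (K : Set V) (v : V) (a b : Fin m → V) (j : ℕ) : Set V :=
  insert v (K \ a '' {l | l.val ≤ j} ∪ b '' {l | l.val < j})

theorem indep_rotationStage (hK : Indep G K) (hvadj : ∀ w ∈ K ∪ range b, ¬ G.Adj v w)
    (hbb : Indep G (range b))
    (hbadj : ∀ i, ∀ w ∈ K, G.Adj (b i) w → ∃ j, j.val ≤ i.val + 1 ∧ a j = w) (j : ℕ) :
    Indep G (rotationStage K v a b j) := by
  intro x hx y hy hxy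
  have hKb : ∀ w ∈ K \ a '' {l | l.val ≤ j}, ∀ l : Fin m, l.val < j → ¬ G.Adj (b l) w := by
    rintro w ⟨hwK, hwa⟩ l hl hbw
    obtain ⟨i, hi, rfl⟩ := hbadj l w hwK hbw
    exact hwa ⟨i, by simp only [mem_ofPred_eq]; omega, rfl⟩
  rcases hx with rfl | hx | ⟨l, hl, rfl⟩ <;> rcases hy with rfl | hy | ⟨l', hl', rfl⟩
  · exact G.irrefl hxy
  · exact hvadj y (.inl hy.1) hxy
  · exact hvadj _ (.inr ⟨l', rfl⟩) hxy
  · exact hvadj x (.inl hx.1) hxy.symm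
  · exact hK x hx.1 y hy.1 hxy
  · exact hKb x hx l' hl' hxy.symm
  · exact hvadj _ (.inr ⟨l, rfl⟩) hxy.symm
  · exact hKb y hy l hl hxy
  · exact hbb _ ⟨l, rfl⟩ _ ⟨l', rfl⟩ hxy

theorem rotationStage_zero (hm : 0 < m) :
    rotationStage K v a b 0 = insert v (K \ {a ⟨0, hm⟩}) := by
  ext x
  simp only [rotationStage, mem_insert_iff, mem_union, mem_sdiff, mem_image, mem_ofPred_eq,
    mem_singleton_iff]
  grind [Fin.ext_iff]

theorem rotationStage_succ (haK : ∀ i, a i ∈ K) (hbK : ∀ i, b i ∉ K) (hvK : v ∉ K) {j : ℕ}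
    (hj : j + 1 < m) :
    rotationStage K v a b (j + 1) =
      insert (b ⟨j, by omega⟩) (rotationStage K v a b j \ {a ⟨j + 1, hj⟩}) := by
  ext x
  simp only [rotationStage, mem_insert_iff, mem_union, mem_sdiff, mem_image, mem_ofPred_eq,
    mem_singleton_iff]
  grind [Fin.ext_iff, Injective]

theorem sdiff_range_union_range_eq_rotationStage (hbK : ∀ i, b i ∉ K) (hvK : v ∉ K)
    (hvb : v ∉ range b) (hm : 0 < m) :
    K \ range a ∪ range b =
      insert (b ⟨m - 1, by omega⟩) (rotationStage K v a b (m - 1) \ {v}) := by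
  ext x
  simp only [rotationStage, mem_insert_iff, mem_union, mem_sdiff, mem_image, mem_ofPred_eq,
    mem_singleton_iff, mem_range]
  grind [Fin.ext_iff]

theorem tjReach_sdiff_range_union_range (hK : Indep G K) (ha : Injective a) (hb : Injective b)
    (haK : ∀ i, a i ∈ K) (hbK : ∀ i, b i ∉ K) (hvK : v ∉ K) (hvb : v ∉ range b)
    (hvadj : ∀ w ∈ K ∪ range b, ¬ G.Adj v w) (hbb : Indep G (range b))
    (hbadj : ∀ i, ∀ w ∈ K, G.Adj (b i) w → ∃ j, j.val ≤ i.val + 1 ∧ a j = w) :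
    TJReach G K (K \ range a ∪ range b) := by
  rcases Nat.eq_zero_or_pos m with rfl | hm
  · simp only [range_eq_empty, sdiff_empty, union_empty]
    exact .refl
  have hS := indep_rotationStage hK hvadj hbb hbadj
  have hmem : ∀ j x, x ∈ rotationStage K v a b j ↔
      x = v ∨ (x ∈ K ∧ ∀ l : Fin m, l.val ≤ j → a l ≠ x) ∨ ∃ l : Fin m, l.val < j ∧ b l = x := by
    simp [rotationStage]
  have hT : Indep G (K \ range a ∪ range b) := by
    rintro x (⟨hxK, hxa⟩ | ⟨l, rfl⟩) y (⟨hyK, hya⟩ | ⟨l', rfl⟩) hxy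
    · exact hK x hxK y hyK hxy
    · obtain ⟨i, -, rfl⟩ := hbadj l' x hxK hxy.symm
      exact hxa ⟨i, rfl⟩
    · obtain ⟨i, -, rfl⟩ := hbadj l y hyK hxy
      exact hya ⟨i, rfl⟩
    · exact hbb _ ⟨l, rfl⟩ _ ⟨l', rfl⟩ hxy
  have hreach : ∀ j < m, TJReach G K (rotationStage K v a b j) := by
    intro j hj
    induction j with
    | zero =>
      have h0 := rotationStage_zero (K := K) (v := v) (a := a) (b := b) hm
      rw [h0]
      exact .single (tjStep_insert_sdiff hK (h0 ▸ hS 0) (haK _) hvK)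
    | succ j ih =>
      have h := rotationStage_succ haK hbK hvK hj
      rw [h]
      refine (ih (by omega)).tail (tjStep_insert_sdiff (hS j) (h ▸ hS (j + 1)) ?_ ?_) <;>
        rw [hmem] <;> grind [Fin.ext_iff, Injective]
  have h := sdiff_range_union_range_eq_rotationStage (a := a) hbK hvK hvb hm
  rw [h]
  refine (hreach _ (by omega)).tail (tjStep_insert_sdiff (hS _) (h ▸ hT) (mem_insert _ _) ?_)
  rw [hmem]
  grind [Fin.ext_iff, Injective]

end Rotation

open Fin.CommRing in
theorem le_of_natCast_eq_of_lt {t n c : ℕ} [NeZero t] (hn : n < t)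
    (h : (n : Fin t) = (c : Fin t)) : n ≤ c := by
  have := congrArg Fin.val h
  rw [Fin.coe_natCast_eq_mod, Fin.coe_natCast_eq_mod, Nat.mod_eq_of_lt hn] at this
  exact this ▸ Nat.mod_le _ _

open Fin.CommRing in
theorem exists_parity_of_alternating_cycle {K : Set V} {k : ℕ} {f : Fin (k + 2) → V}
    (hadj : ∀ p q, G.Adj (f p) (f q) ↔ (cycleGraph (k + 2)).Adj p q)
    (halt : ∀ p q, G.Adj (f p) (f q) → (f p ∈ K ↔ f q ∉ K)) :
    ∃ u : Fin (k + 2), (∀ n : ℕ, f (u + n) ∈ K ↔ Even n) ∧ Even (k + 2) := by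
  have hsucc : ∀ p, G.Adj (f p) (f (p + 1)) := fun p =>
    (hadj _ _).2 (cycleGraph_adj.2 (.inr (by ring)))
  obtain ⟨u, hu⟩ : ∃ u, f u ∈ K := by
    by_cases h0 : f 0 ∈ K
    · exact ⟨0, h0⟩
    · exact ⟨1, by simpa [h0] using halt 0 1 (by simpa using hsucc 0)⟩
  have hpar : ∀ n : ℕ, f (u + n) ∈ K ↔ Even n := by
    intro n
    induction n with
    | zero => simpa using hu
    | succ n ih =>
      have := halt _ _ (hsucc (u + n))
      rw [Nat.even_add_one, ← ih, Nat.cast_succ, ← add_assoc]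
      tauto
  refine ⟨u, hpar, ?_⟩
  rw [← hpar, Fin.natCast_self, add_zero]
  exact hu

open Fin.CommRing in
theorem le_add_two_of_cycleGraph_adj {k p n : ℕ} (hn : n < k + 2) (u : Fin (k + 2))
    (h : (cycleGraph (k + 2)).Adj (u + (p + 1 : ℕ)) (u + n)) : n ≤ p + 2 := by
  have hpn : (n : Fin (k + 2)) = (p : ℕ) ∨ (n : Fin (k + 2)) = (p + 2 : ℕ) := by
    rcases cycleGraph_adj.1 h with h | h <;> push_cast at h ⊢
    · left; linear_combination -h
    · right; linear_combination h
  rcases hpn with h' | h' <;> have := le_of_natCast_eq_of_lt hn h' <;> omega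

open Fin.CommRing in
theorem exists_enum_of_alternating_cycle {K : Set V} {t : ℕ} (ht : 2 ≤ t) {f : Fin t → V}
    (hf : Injective f) (hadj : ∀ p q, G.Adj (f p) (f q) ↔ (cycleGraph t).Adj p q)
    (halt : ∀ p q, G.Adj (f p) (f q) → (f p ∈ K ↔ f q ∉ K)) :
    ∃ (m : ℕ) (a b : Fin m → V), Injective a ∧ Injective b ∧
      range a = range f ∩ K ∧ range b = range f \ K ∧
      ∀ i p, G.Adj (b i) (f p) → ∃ j, j.val ≤ i.val + 1 ∧ a j = f p := by
  obtain ⟨k, rfl⟩ : ∃ k, t = k + 2 := ⟨t - 2, by omega⟩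
  obtain ⟨u, hpar, m, hm⟩ := exists_parity_of_alternating_cycle hadj halt
  let g : ℕ → V := fun n => f (u + n)
  have hg_inj : ∀ n n', n < k + 2 → n' < k + 2 → g n = g n' → n = n' := fun n n' hn hn' h =>
    have h' := add_left_cancel (hf h)
    le_antisymm (le_of_natCast_eq_of_lt hn h') (le_of_natCast_eq_of_lt hn' h'.symm)
  have hg_surj : ∀ p, ∃ n < k + 2, u + (n : Fin (k + 2)) = p := fun p =>
    ⟨(p - u).val, (p - u).isLt, by simp⟩
  have hb_notMem : ∀ i : ℕ, g (2 * i + 1) ∉ K := fun i h =>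
    Nat.not_even_two_mul_add_one i ((hpar _).1 h)
  refine ⟨m, fun i => g (2 * i), fun i => g (2 * i + 1), ?_, ?_, ?_, ?_, ?_⟩
  · exact fun i i' h => Fin.ext (by have := hg_inj _ _ (by omega) (by omega) h; omega)
  · exact fun i i' h => Fin.ext (by have := hg_inj _ _ (by omega) (by omega) h; omega)
  · ext x
    constructor
    · rintro ⟨i, rfl⟩
      exact ⟨⟨_, rfl⟩, (hpar _).2 (even_two_mul _)⟩
    · rintro ⟨⟨p, rfl⟩, hp⟩
      obtain ⟨n, hn, rfl⟩ := hg_surj p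
      obtain ⟨r, rfl⟩ := (hpar n).1 hp
      exact ⟨⟨r, by omega⟩, congrArg g (two_mul r)⟩
  · ext x
    constructor
    · rintro ⟨i, rfl⟩
      exact ⟨⟨_, rfl⟩, hb_notMem i⟩
    · rintro ⟨⟨p, rfl⟩, hp⟩
      obtain ⟨n, hn, rfl⟩ := hg_surj p
      obtain ⟨r, rfl⟩ := Nat.not_even_iff_odd.1 (mt (hpar n).2 hp)
      exact ⟨⟨r, by omega⟩, rfl⟩
  · intro i p h
    obtain ⟨n, hn, rfl⟩ := hg_surj p
    obtain ⟨r, rfl⟩ := (hpar n).1 (not_not.1 (mt (halt _ _ h).2 (hb_notMem i)))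
    have := le_add_two_of_cycleGraph_adj hn u ((hadj _ _).1 h)
    exact ⟨⟨r, by omega⟩, show r ≤ i.val + 1 by omega, congrArg g (two_mul r)⟩

theorem symmDiff_union_of_disjoint (I : Set V) {C S : Set V} (h : Disjoint C S) :
    symmDiff I (C ∪ S) = symmDiff I S \ (C ∩ I) ∪ C \ I := by
  ext x
  have := h.notMem_of_mem_left (a := x)
  simp only [mem_symmDiff, mem_union, mem_sdiff, mem_inter_iff]
  tauto

section SymmDiff

variable {I J : Set V}

theorem mem_of_mem_symmDiff_of_notMem {x : V} (hx : x ∈ symmDiff I J) (hxI : x ∉ I) : x ∈ J :=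
  ((mem_symmDiff.1 hx).resolve_left fun h => hxI h.1).1

theorem mem_iff_notMem_of_adj_of_mem_symmDiff (hI : Indep G I) (hJ : Indep G J) {x y : V}
    (hx : x ∈ symmDiff I J) (hy : y ∈ symmDiff I J) (hxy : G.Adj x y) : x ∈ I ↔ y ∉ I := by
  rcases mem_symmDiff.1 hx with ⟨hxI, -⟩ | ⟨hxJ, hxI⟩ <;>
    rcases mem_symmDiff.1 hy with ⟨hyI, -⟩ | ⟨hyJ, hyI⟩
  · exact absurd hxy (hI x hxI y hyI)
  · exact iff_of_true hxI hyI
  · exact iff_of_false hxI (not_not.2 hyI)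
  · exact absurd hxy (hJ x hxJ y hyJ)

theorem indep_symmDiff_of_closed (hI : Indep G I) (hJ : Indep G J) {S : Set V}
    (hS : S ⊆ symmDiff I J) (hclosed : ∀ x ∈ S, ∀ y ∈ symmDiff I J, G.Adj x y → y ∈ S) :
    Indep G (symmDiff I S) := by
  have hSJ : ∀ x ∈ S, x ∉ I → x ∈ J := fun x hx => mem_of_mem_symmDiff_of_notMem (hS hx)
  have cross : ∀ x ∈ I, x ∉ S → ∀ y ∈ S, y ∉ I → ¬ G.Adj x y := by
    intro x hxI hxS y hyS hyI hxy
    by_cases hxJ : x ∈ J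
    · exact hJ x hxJ y (hSJ y hyS hyI) hxy
    · exact hxS (hclosed y hyS x (.inl ⟨hxI, hxJ⟩) hxy.symm)
  rintro x (⟨hxI, hxS⟩ | ⟨hxS, hxI⟩) y (⟨hyI, hyS⟩ | ⟨hyS, hyI⟩) hxy
  · exact hI x hxI y hyI hxy
  · exact cross x hxI hxS y hyS hyI hxy
  · exact cross y hyI hyS x hxS hxI hxy.symm
  · exact hJ x (hSJ x hxS hxI) y (hSJ y hyS hyI) hxy

end SymmDiff

section Components

variable {D : Set V}

variable (G) in
def componentsSupp (D : Set V) (s : Set (G.induce D).ConnectedComponent) : Set V :=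
  Subtype.val '' {x | (G.induce D).connectedComponentMk x ∈ s}

theorem componentsSupp_subset (s : Set (G.induce D).ConnectedComponent) :
    componentsSupp G D s ⊆ D := by
  rintro _ ⟨x, -, rfl⟩
  exact x.2

@[simp]
theorem componentsSupp_empty : componentsSupp G D ∅ = ∅ := by
  simp [componentsSupp]

@[simp]
theorem componentsSupp_univ : componentsSupp G D univ = D := by
  simp [componentsSupp]

theorem componentsSupp_insert (c : (G.induce D).ConnectedComponent)
    (s : Set (G.induce D).ConnectedComponent) :
    componentsSupp G D (insert c s) = componentsSupp G D {c} ∪ componentsSupp G D s := by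
  simp only [componentsSupp, mem_insert_iff, ofPred_or, image_union, mem_singleton_iff]

theorem disjoint_componentsSupp_singleton {c : (G.induce D).ConnectedComponent}
    {s : Set (G.induce D).ConnectedComponent} (hc : c ∉ s) :
    Disjoint (componentsSupp G D {c}) (componentsSupp G D s) := by
  rw [Set.disjoint_left]
  rintro _ ⟨x, rfl, rfl⟩ ⟨y, hy, hyx⟩
  rw [Subtype.ext hyx] at hy
  exact hc hy

theorem mem_componentsSupp_of_adj {s : Set (G.induce D).ConnectedComponent} {x y : V}
    (hx : x ∈ componentsSupp G D s) (hy : y ∈ D) (hxy : G.Adj x y) :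
    y ∈ componentsSupp G D s := by
  obtain ⟨x, hxs, rfl⟩ := hx
  refine ⟨⟨y, hy⟩, ?_, rfl⟩
  have hxy' : (G.induce D).Adj x ⟨y, hy⟩ := hxy
  rwa [mem_ofPred_eq, ← ConnectedComponent.sound hxy'.reachable]

theorem exists_param_of_iso_cycleGraph {c : (G.induce D).ConnectedComponent} {t : ℕ}
    (e : (G.induce D).induce c.supp ≃g cycleGraph t) :
    ∃ f : Fin t → V, Injective f ∧ range f = componentsSupp G D {c} ∧
      ∀ p q, G.Adj (f p) (f q) ↔ (cycleGraph t).Adj p q := by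
  refine ⟨fun p => (e.symm p).1.1, fun p q h => e.symm.injective (Subtype.ext (Subtype.ext h)),
    ?_, fun p q => e.symm.map_rel_iff⟩
  ext x
  constructor
  · rintro ⟨p, rfl⟩
    exact ⟨_, (e.symm p).2, rfl⟩
  · rintro ⟨y, hy, rfl⟩
    exact ⟨e ⟨y, hy⟩, by simp only [e.symm_apply_apply]⟩

open Fin.CommRing in
theorem exists_two_adj_of_iso_cycleGraph {c : (G.induce D).ConnectedComponent} {t : ℕ}
    (ht : 3 ≤ t) (e : (G.induce D).induce c.supp ≃g cycleGraph t) {x : V}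
    (hx : x ∈ componentsSupp G D {c}) :
    ∃ y z, y ≠ z ∧ G.Adj x y ∧ G.Adj x z ∧ y ∈ D ∧ z ∈ D := by
  obtain ⟨f, hf, hrange, hadj⟩ := exists_param_of_iso_cycleGraph e
  obtain ⟨k, rfl⟩ : ∃ k, t = k + 3 := ⟨t - 3, by omega⟩
  obtain ⟨p, rfl⟩ := hrange ▸ hx
  have hD : ∀ q, f q ∈ D := fun q => componentsSupp_subset _ (hrange ▸ mem_range_self q)
  refine ⟨f (p + 1), f (p - 1), hf.ne ?_, (hadj _ _).2 ?_, (hadj _ _).2 ?_, hD _, hD _⟩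
  · intro h
    have h2 : (2 : Fin (k + 3)) = 0 := by linear_combination h
    rw [Fin.ext_iff, Fin.val_two, Fin.val_zero] at h2
    omega
  · exact cycleGraph_adj.2 (.inr (by ring))
  · exact cycleGraph_adj.2 (.inl (by ring))

end Components

section Reconfiguration

variable {I J : Set V}

theorem notMem_and_not_adj_of_clawFree (hcf : ClawFree G) (hI : Indep G I) (hJ : Indep G J)
    (hcyc : ∀ comp : (G.induce (symmDiff I J)).ConnectedComponent,
      ∃ t : ℕ, 3 ≤ t ∧ Nonempty (((G.induce (symmDiff I J)).induce comp.supp) ≃g cycleGraph t))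
    {v : V} (hvI : v ∉ I) (hv : ∀ u ∈ I, ¬ G.Adj v u) :
    v ∉ J ∧ ∀ w ∈ J, ¬ G.Adj v w := by
  have hnbrs : ∀ x ∈ J, x ∉ I → ∃ y z, y ≠ z ∧ G.Adj x y ∧ G.Adj x z ∧ y ∈ I ∧ z ∈ I := by
    intro x hxJ hxI
    have hx : x ∈ symmDiff I J := .inr ⟨hxJ, hxI⟩
    obtain ⟨t, ht, ⟨e⟩⟩ := hcyc ((G.induce _).connectedComponentMk ⟨x, hx⟩)
    obtain ⟨y, z, hyz, hxy, hxz, hy, hz⟩ :=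
      exists_two_adj_of_iso_cycleGraph ht e ⟨⟨x, hx⟩, rfl, rfl⟩
    have hmemI : ∀ w ∈ symmDiff I J, G.Adj x w → w ∈ I := fun w hw hxw =>
      not_not.1 (mt (mem_iff_notMem_of_adj_of_mem_symmDiff hI hJ hx hw hxw).2 hxI)
    exact ⟨y, z, hyz, hxy, hxz, hmemI y hy hxy, hmemI z hz hxz⟩
  have hvJ : v ∉ J := fun hvJ => by
    obtain ⟨y, -, -, hvy, -, hy, -⟩ := hnbrs v hvJ hvI
    exact hv y hy hvy
  refine ⟨hvJ, fun w hwJ hvw => ?_⟩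
  by_cases hwI : w ∈ I
  · exact hv w hwI hvw
  obtain ⟨y, z, hyz, hwy, hwz, hy, hz⟩ := hnbrs w hwJ hwI
  exact hcf ⟨w, v, y, z, hvw.symm, hwy, hwz, fun h => hvI (h ▸ hy), fun h => hvI (h ▸ hz), hyz,
    hv y hy, hv z hz, hI y hy z hz⟩

theorem tjReach_symmDiff_componentsSupp_insert (hI : Indep G I) (hJ : Indep G J) {v : V}
    (hv : v ∉ I ∪ J) (hvadj : ∀ w ∈ I ∪ J, ¬ G.Adj v w)
    {s : Set (G.induce (symmDiff I J)).ConnectedComponent}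
    {c : (G.induce (symmDiff I J)).ConnectedComponent} (hc : c ∉ s) {t : ℕ} (ht : 2 ≤ t)
    (e : (G.induce (symmDiff I J)).induce c.supp ≃g cycleGraph t) :
    TJReach G (symmDiff I (componentsSupp G (symmDiff I J) s))
      (symmDiff I (componentsSupp G (symmDiff I J) (insert c s))) := by
  obtain ⟨f, hf, hfC, hadj⟩ := exists_param_of_iso_cycleGraph e
  set S := componentsSupp G (symmDiff I J) s
  set C := componentsSupp G (symmDiff I J) {c}
  have hCD : C ⊆ symmDiff I J := componentsSupp_subset _
  have hCS : Disjoint C S := disjoint_componentsSupp_singleton hc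
  obtain ⟨m, a, b, ha, hb, hra, hrb, hbadj⟩ := exists_enum_of_alternating_cycle ht hf hadj
    fun p q h => mem_iff_notMem_of_adj_of_mem_symmDiff hI hJ (hCD (hfC ▸ mem_range_self p))
      (hCD (hfC ▸ mem_range_self q)) h
  rw [hfC] at hra hrb
  have hSIJ : symmDiff I S ⊆ I ∪ J := by
    rintro x (⟨hxI, -⟩ | ⟨hxS, hxI⟩)
    exacts [.inl hxI, .inr (mem_of_mem_symmDiff_of_notMem (componentsSupp_subset s hxS) hxI)]
  have haC : ∀ i, a i ∈ C ∩ I := fun i => hra ▸ mem_range_self i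
  have hbC : ∀ i, b i ∈ C \ I := fun i => hrb ▸ mem_range_self i
  have hbJ : ∀ i, b i ∈ J := fun i => mem_of_mem_symmDiff_of_notMem (hCD (hbC i).1) (hbC i).2
  have hbS : ∀ i, b i ∉ symmDiff I S := by
    rintro i (⟨hbI, -⟩ | ⟨hbS, -⟩)
    exacts [(hbC i).2 hbI, hCS.notMem_of_mem_left (hbC i).1 hbS]
  have hbadj' : ∀ i, ∀ w ∈ symmDiff I S, G.Adj (b i) w → ∃ j, j.val ≤ i.val + 1 ∧ a j = w := by
    intro i w hw hbw
    have hwJ : w ∉ J := fun hwJ => hJ _ (hbJ i) _ hwJ hbw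
    obtain ⟨p, rfl⟩ : w ∈ range f := hfC ▸ mem_componentsSupp_of_adj (hbC i).1
      (.inl ⟨(hSIJ hw).resolve_right hwJ, hwJ⟩) hbw
    exact hbadj i p hbw
  rw [componentsSupp_insert, symmDiff_union_of_disjoint I hCS, ← hra, ← hrb]
  refine tjReach_sdiff_range_union_range (indep_symmDiff_of_closed hI hJ (componentsSupp_subset s)
      fun x hx y hy hxy => mem_componentsSupp_of_adj hx hy hxy) ha hb
    (fun i => .inl ⟨(haC i).2, hCS.notMem_of_mem_left (haC i).1⟩) hbS (fun h => hv (hSIJ h))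
    ?_ ?_ ?_ hbadj'
  · rintro ⟨i, rfl⟩
    exact hv (.inr (hbJ i))
  · rintro w (hw | ⟨i, rfl⟩)
    exacts [hvadj w (hSIJ hw), hvadj _ (.inr (hbJ i))]
  · rintro _ ⟨i, rfl⟩ _ ⟨j, rfl⟩
    exact hJ _ (hbJ i) _ (hbJ j)

end Reconfiguration

theorem stmt_11_general {V : Type} [Fintype V] (G : SimpleGraph V)
    (hcf : ClawFree G) (I J : Set V) (hI : Indep G I) (hJ : Indep G J)
    (hnotdom : ∃ v : V, v ∉ I ∧ ∀ u ∈ I, ¬ G.Adj v u)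
    (hcyc : ∀ comp : (G.induce (symmDiff I J)).ConnectedComponent,
      ∃ t : ℕ, 3 ≤ t ∧
        Nonempty (((G.induce (symmDiff I J)).induce comp.supp) ≃g cycleGraph t)) :
    TJReach G I J := by
  obtain ⟨v, hvI, hv⟩ := hnotdom
  obtain ⟨hvJ, hvJadj⟩ := notMem_and_not_adj_of_clawFree hcf hI hJ hcyc hvI hv
  have hvIJ : v ∉ I ∪ J := by rintro (h | h); exacts [hvI h, hvJ h]
  have hvadj : ∀ w ∈ I ∪ J, ¬ G.Adj v w := by rintro w (hw | hw); exacts [hv w hw, hvJadj w hw]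
  have hreach : ∀ s : Set (G.induce (symmDiff I J)).ConnectedComponent, s.Finite →
      TJReach G I (symmDiff I (componentsSupp G (symmDiff I J) s)) := by
    intro s hs
    induction s, hs using Set.Finite.induction_on with
    | empty =>
      rw [componentsSupp_empty, ← bot_eq_empty, symmDiff_bot]
      exact .refl
    | @insert c s hc _ ih =>
      obtain ⟨t, ht, ⟨e⟩⟩ := hcyc c
      exact ih.trans (tjReach_symmDiff_componentsSupp_insert hI hJ hvIJ hvadj hc (by omega) e)
  simpa only [componentsSupp_univ, symmDiff_symmDiff_cancel_left] using hreach univ (toFinite _)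

/-- If `I` is not dominating and `G[I △ J]` is a disjoint union of cycles, then there is
a TJ-sequence from `I` to `J`. -/
theorem stmt_11 {V : Type} [Fintype V] [DecidableEq V] (G : SimpleGraph V)
    (hcf : ClawFree G) (I J : Set V) (hI : Indep G I) (hJ : Indep G J)
    (hnotdom : ∃ v : V, v ∉ I ∧ ∀ u ∈ I, ¬ G.Adj v u)
    (hcyc : ∀ comp : (G.induce (symmDiff I J)).ConnectedComponent,
      ∃ t : ℕ, 3 ≤ t ∧
        Nonempty (((G.induce (symmDiff I J)).induce comp.supp) ≃g cycleGraph t)) :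
    TJReach G I J :=
  stmt_11_general G hcf I J hI hJ hnotdom hcyc
end

section
/- Let G be a claw-free graph and I a non-maximum independent set of G. Then I is not a dominating set, or there exists an I-augmenting path in G (an I-alternating chordless path of length at least 2 both of whose endpoints are free vertices). -/
open SimpleGraph

/-! If `I` dominates `G` and `S` is a larger independent set, look at the bipartite graph of the
edges of `G` between `S \ I` and `I \ S`. Claw-freeness bounds its degrees by two, and domination
leaves no vertex of `S \ I` isolated. As `S \ I` is the larger side, some component is a path with
both ends in `S \ I`. Its ends have at most one neighbour in `I`, and since `S` and `I` are
independent it has no chord in `G`: it is an `I`-augmenting path. -/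

namespace Finset

lemma sum_add_card_filter_eq_one_add_two_mul_card_filter_eq_zero {α : Type*}
    {s : Finset α} {f : α → ℕ} (hf : ∀ a ∈ s, f a ≤ 2) :
    ∑ a ∈ s, f a + #{a ∈ s | f a = 1} + 2 * #{a ∈ s | f a = 0} = 2 * #s := by
  rw [card_filter, card_filter, mul_sum, ← sum_add_distrib, ← sum_add_distrib, card_eq_sum_ones,
    mul_sum]
  refine sum_congr rfl fun a ha => ?_
  have := hf a ha
  split_ifs <;> omega

end Finset

namespace SimpleGraph

variable {V : Type*} {H : SimpleGraph V} {n m i j : ℕ} {x y : ℕ → V} {v w : V}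

/-- The values of `x` beyond `n` are irrelevant. -/
structure IsPathSeq (H : SimpleGraph V) (n : ℕ) (x : ℕ → V) : Prop where
  injOn : Set.InjOn x (Set.Iic n)
  adj : ∀ j < n, H.Adj (x j) (x (j + 1))

namespace IsPathSeq

lemma const_zero (v : V) : H.IsPathSeq 0 fun _ => v where
  injOn _ hi _ hj _ := by simp_all
  adj _ h := absurd h (Nat.not_lt_zero _)

lemma eq_of_apply_eq (hx : H.IsPathSeq n x) (hi : i ≤ n) (hj : j ≤ n) (h : x i = x j) : i = j :=
  hx.injOn (Set.mem_Iic.2 hi) (Set.mem_Iic.2 hj) h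

lemma adj_pred (hx : H.IsPathSeq n x) (h0 : 0 < i) (hi : i ≤ n) : H.Adj (x i) (x (i - 1)) := by
  have h := hx.adj (i - 1) (by omega)
  rw [Nat.sub_add_cancel h0] at h
  exact h.symm

lemma reverse (hx : H.IsPathSeq n x) : H.IsPathSeq n fun i => x (n - i) where
  injOn i hi j hj h := by
    simp only [Set.mem_Iic] at hi hj
    have := hx.eq_of_apply_eq (Nat.sub_le n i) (Nat.sub_le n j) h
    omega
  adj j hj := by
    have h := hx.adj_pred (i := n - j) (by omega) (Nat.sub_le n j)
    rwa [show n - j - 1 = n - (j + 1) by omega] at h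

lemma extend (hx : H.IsPathSeq n x) (hadj : H.Adj (x n) w) (hnew : ∀ i ≤ n, w ≠ x i) :
    H.IsPathSeq (n + 1) (Function.update x (n + 1) w) := by
  have hold : ∀ i ≤ n, Function.update x (n + 1) w i = x i := fun i hi =>
    Function.update_of_ne (by omega) _ _
  refine ⟨fun i hi j hj h => ?_, fun j hj => ?_⟩
  · simp only [Set.mem_Iic] at hi hj
    rcases Nat.lt_or_ge n i with hi' | hi' <;> rcases Nat.lt_or_ge n j with hj' | hj'
    · omega
    · rw [show i = n + 1 by omega, Function.update_self, hold j hj'] at h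
      exact absurd h (hnew j hj')
    · rw [show j = n + 1 by omega, Function.update_self, hold i hi'] at h
      exact absurd h.symm (hnew i hi')
    · rw [hold i hi', hold j hj'] at h
      exact hx.eq_of_apply_eq hi' hj' h
  · rcases Nat.lt_or_ge j n with hj' | hj'
    · rw [hold j hj'.le, hold (j + 1) hj']
      exact hx.adj j hj'
    · obtain rfl : j = n := by omega
      rwa [hold j le_rfl, Function.update_self]

lemma lt_card [Finite V] (hx : H.IsPathSeq n x) : n < Nat.card V := by
  have h := Set.ncard_le_card (x '' Set.Iic n)
  rw [hx.injOn.ncard_image, Set.ncard_Iic_nat] at h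
  omega

lemma mem_of_isBipartiteWith {s t : Set V} (h : H.IsBipartiteWith s t) (hx : H.IsPathSeq n x)
    (hx₀ : x 0 ∈ s) : ∀ j ≤ n, (Even j → x j ∈ s) ∧ (Odd j → x j ∈ t) := by
  intro j
  induction j with
  | zero => exact fun _ => ⟨fun _ => hx₀, fun h => absurd h (by simp)⟩
  | succ j ih =>
    intro hj
    have hadj := hx.adj j (by omega)
    refine ⟨fun he => h.mem_of_mem_adj' ((ih (by omega)).2 ?_) hadj.symm,
      fun ho => h.mem_of_mem_adj ((ih (by omega)).1 ?_) hadj⟩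
    · rwa [Nat.even_add_one, Nat.not_even_iff_odd] at he
    · rwa [← Nat.not_even_iff_odd, Nat.even_add_one, not_not] at ho

end IsPathSeq

section MaxDegreeTwo

variable [Finite V] (hdeg : ∀ v, (H.neighborSet v).ncard ≤ 2)
include hdeg

namespace IsPathSeq

lemma eq_or_eq_of_adj (hx : H.IsPathSeq n x) (h0 : 0 < i) (hi : i < n)
    (hw : H.Adj (x i) w) : w = x (i - 1) ∨ w = x (i + 1) := by
  by_contra! hne
  have hpred_ne_succ : x (i - 1) ≠ x (i + 1) := fun h => by
    have := hx.eq_of_apply_eq (by omega) (by omega) h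
    omega
  have h3 : 2 < (H.neighborSet (x i)).ncard := (Set.two_lt_ncard).2
    ⟨x (i - 1), hx.adj_pred h0 hi.le, x (i + 1), hx.adj i hi, w, hw, hpred_ne_succ,
      hne.1.symm, hne.2.symm⟩
  exact absurd (hdeg (x i)) (by omega)

lemma apply_eq_of_apply_zero_eq (hx : H.IsPathSeq n x) (hy : H.IsPathSeq m y) (h0 : x 0 = y 0)
    (hleaf : (H.neighborSet (x 0)).ncard ≤ 1) (hin : i ≤ n) (him : i ≤ m) : x i = y i := by
  suffices h : ∀ i, i + 1 ≤ n → i + 1 ≤ m → x i = y i ∧ x (i + 1) = y (i + 1) by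
    rcases i with _ | i
    · exact h0
    · exact (h i hin him).2
  intro i
  induction i with
  | zero =>
    intro hn hm
    refine ⟨h0, (Set.ncard_le_one_iff).1 hleaf (hx.adj 0 hn) ?_⟩
    rw [h0]
    exact hy.adj 0 hm
  | succ i ih =>
    intro hn hm
    obtain ⟨hi, hi1⟩ := ih (by omega) (by omega)
    refine ⟨hi1, ?_⟩
    have hadj : H.Adj (y (i + 1)) (x (i + 2)) := hi1 ▸ hx.adj (i + 1) hn
    rcases hy.eq_or_eq_of_adj hdeg (by omega) hm hadj with h | h
    · rw [Nat.add_sub_cancel, ← hi] at h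
      exact absurd (hx.eq_of_apply_eq hn (by omega) h) (by omega)
    · exact h

lemma eq_pred_or_forall_ne_of_adj_last (hx : H.IsPathSeq n x)
    (hleaf : (H.neighborSet (x 0)).ncard ≤ 1) (hw : H.Adj (x n) w) :
    w = x (n - 1) ∨ ∀ i ≤ n, w ≠ x i := by
  refine or_iff_not_imp_right.2 fun hold => ?_
  push Not at hold
  obtain ⟨i, hi, rfl⟩ := hold
  have hin : i ≠ n := by
    rintro rfl
    exact hw.ne rfl
  rcases Nat.eq_zero_or_pos i with rfl | h0
  · have h := (Set.ncard_le_one_iff).1 hleaf hw.symm (hx.adj 0 (by omega))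
    obtain rfl : n = 1 := hx.eq_of_apply_eq le_rfl (by omega) h
    rfl
  · rcases hx.eq_or_eq_of_adj hdeg h0 (by omega) hw.symm with h | h <;>
      have := hx.eq_of_apply_eq le_rfl (by omega) h
    · omega
    · rw [show n - 1 = i by omega]

lemma succ_eq_or_eq_succ_of_adj (hx : H.IsPathSeq n x)
    (hleaf₀ : (H.neighborSet (x 0)).ncard ≤ 1) (hleafₙ : (H.neighborSet (x n)).ncard ≤ 1)
    (hi : i ≤ n) (hj : j ≤ n) (hadj : H.Adj (x i) (x j)) : i + 1 = j ∨ j + 1 = i := by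
  have hij : i ≠ j := by
    rintro rfl
    exact hadj.ne rfl
  rcases Nat.eq_zero_or_pos i with rfl | h0
  · have h := (Set.ncard_le_one_iff).1 hleaf₀ hadj (hx.adj 0 (by omega))
    have := hx.eq_of_apply_eq hj (by omega) h
    omega
  rcases Nat.lt_or_ge i n with hin | hin
  · rcases hx.eq_or_eq_of_adj hdeg h0 hin hadj with h | h <;>
      have := hx.eq_of_apply_eq hj (by omega) h <;> omega
  · obtain rfl : i = n := by omega
    have h := (Set.ncard_le_one_iff).1 hleafₙ hadj (hx.adj_pred h0 le_rfl)
    have := hx.eq_of_apply_eq hj (by omega) h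
    omega

lemma eq_and_apply_eq_of_apply_zero_eq (hx : H.IsPathSeq n x) (hy : H.IsPathSeq m y)
    (h0 : x 0 = y 0) (hleaf₀ : (H.neighborSet (x 0)).ncard ≤ 1)
    (hleafₙ : (H.neighborSet (x n)).ncard ≤ 1) (hn : 1 ≤ n) (hnm : n ≤ m) :
    n = m ∧ x n = y m := by
  have hxy := hx.apply_eq_of_apply_zero_eq hdeg hy h0 hleaf₀ le_rfl hnm
  suffices n = m by exact ⟨this, this ▸ hxy⟩
  by_contra hne
  rw [hxy] at hleafₙ
  have h := (Set.ncard_le_one_iff).1 hleafₙ (hy.adj_pred (by omega) hnm) (hy.adj n (by omega))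
  have := hy.eq_of_apply_eq (by omega) (by omega) h
  omega

lemma apply_zero_eq_of_apply_eq (hx : H.IsPathSeq n x) (hy : H.IsPathSeq m y) (hn : 1 ≤ n)
    (hm : 1 ≤ m) (hx₀ : (H.neighborSet (x 0)).ncard ≤ 1)
    (hy₀ : (H.neighborSet (y 0)).ncard ≤ 1) (hxₙ : (H.neighborSet (x n)).ncard ≤ 1)
    (hend : x n = y m) : x 0 = y 0 := by
  have hyₘ : (H.neighborSet (y m)).ncard ≤ 1 := hend ▸ hxₙ
  rcases le_total n m with hnm | hmn
  · have h := hx.reverse.eq_and_apply_eq_of_apply_zero_eq hdeg hy.reverse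
      (by simpa using hend) (by simpa using hxₙ) (by simpa using hx₀) hn hnm
    simpa using h.2
  · have h := hy.reverse.eq_and_apply_eq_of_apply_zero_eq hdeg hx.reverse
      (by simpa using hend.symm) (by simpa using hyₘ) (by simpa using hy₀) hm hmn
    simpa using h.2.symm

end IsPathSeq

theorem exists_isPathSeq_of_ncard_neighborSet_eq_one
    (hv : (H.neighborSet v).ncard = 1) :
    ∃ n x, 1 ≤ n ∧ H.IsPathSeq n x ∧ x 0 = v ∧ (H.neighborSet (x n)).ncard ≤ 1 := by
  by_contra! hext
  have hlong : ∀ n, ∃ x, H.IsPathSeq (n + 1) x ∧ x 0 = v := by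
    intro n
    induction n with
    | zero =>
      obtain ⟨w, hw⟩ := Set.ncard_eq_one.1 hv
      have hadj : H.Adj v w := by
        rw [← mem_neighborSet, hw]
        rfl
      exact ⟨_, (IsPathSeq.const_zero v).extend hadj fun _ _ => hadj.ne.symm,
        Function.update_of_ne (by omega) _ _⟩
    | succ n ih =>
      obtain ⟨x, hx, rfl⟩ := ih
      obtain ⟨a, ha, b, hb, hab⟩ := (Set.one_lt_ncard).1 (hext _ x (by omega) hx rfl)
      obtain ⟨w, hw, hwne⟩ : ∃ w, H.Adj (x (n + 1)) w ∧ w ≠ x n := by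
        by_cases han : a = x n
        · exact ⟨b, hb, han ▸ hab.symm⟩
        · exact ⟨a, ha, han⟩
      rcases hx.eq_pred_or_forall_ne_of_adj_last hdeg hv.le hw with h | hnew
      · exact absurd h hwne
      · exact ⟨_, hx.extend hw hnew, Function.update_of_ne (by omega) _ _⟩
  obtain ⟨x, hx, -⟩ := hlong (Nat.card V)
  exact absurd hx.lt_card (by omega)

lemma IsBipartiteWith.ncard_leaves_lt {s t : Set V}
    (h : H.IsBipartiteWith s t) (hs : ∀ v ∈ s, (H.neighborSet v).Nonempty)
    (hst : t.ncard < s.ncard) :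
    {v ∈ t | (H.neighborSet v).ncard = 1}.ncard <
      {v ∈ s | (H.neighborSet v).ncard = 1}.ncard := by
  classical
  have := Fintype.ofFinite V
  set d : V → ℕ := fun v => (H.neighborSet v).ncard
  have hsum : ∑ v ∈ s.toFinset, d v = ∑ v ∈ t.toFinset, d v := by
    convert isBipartiteWith_sum_degrees_eq (s := s.toFinset) (t := t.toFinset) (by simpa using h)
      using 2 with v - v - <;>
    rw [← card_neighborFinset_eq_degree, ← Set.ncard_coe_finset, coe_neighborFinset]
  have hs₀ : {v ∈ s.toFinset | d v = 0} = ∅ := Finset.filter_eq_empty_iff.2 fun v hv => by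
    have := (Set.ncard_pos).2 (hs v (Set.mem_toFinset.1 hv))
    simp only [d]
    omega
  have hcount := fun u : Finset V =>
    Finset.sum_add_card_filter_eq_one_add_two_mul_card_filter_eq_zero (s := u) (f := d)
      fun v _ => hdeg v
  have hleaves : ∀ u : Set V, {v ∈ u | d v = 1}.ncard = (u.toFinset.filter (d · = 1)).card :=
    fun u => by simp only [← Set.ncard_coe_finset, Finset.coe_filter, Set.mem_toFinset]
  have hs' := hcount s.toFinset
  have ht' := hcount t.toFinset
  rw [hs₀, Finset.card_empty] at hs'
  rw [Set.ncard_eq_toFinset_card', Set.ncard_eq_toFinset_card'] at hst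
  change {v ∈ t | d v = 1}.ncard < {v ∈ s | d v = 1}.ncard
  rw [hleaves, hleaves]
  omega

/-- Degree counting gives `s` more vertices of degree one than `t`, while following the path
from a degree-one vertex to its other end pairs degree-one vertices injectively. -/
theorem IsBipartiteWith.exists_isPathSeq_of_ncard_lt {s t : Set V} (h : H.IsBipartiteWith s t)
    (hs : ∀ v ∈ s, (H.neighborSet v).Nonempty) (hst : t.ncard < s.ncard) :
    ∃ n x, 1 ≤ n ∧ H.IsPathSeq n x ∧ x 0 ∈ s ∧ x n ∈ s ∧
      (H.neighborSet (x 0)).ncard ≤ 1 ∧ (H.neighborSet (x n)).ncard ≤ 1 := by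
  by_contra! hno
  have hpath : ∀ v ∈ {v ∈ s | (H.neighborSet v).ncard = 1},
      ∃ w ∈ {v ∈ t | (H.neighborSet v).ncard = 1}, ∃ n x, 1 ≤ n ∧ H.IsPathSeq n x ∧
        x 0 = v ∧ x n = w ∧ (H.neighborSet (x n)).ncard ≤ 1 := by
    rintro v ⟨hvs, hv⟩
    obtain ⟨n, x, hn, hx, rfl, hleaf⟩ := exists_isPathSeq_of_ncard_neighborSet_eq_one hdeg hv
    have hpred := hx.adj_pred (by omega) le_rfl
    have hxn : x n ∈ t := by
      rcases h.mem_of_adj hpred with ⟨hs', -⟩ | ⟨ht, -⟩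
      · exact absurd hleaf (not_le.2 (hno n x hn hx hvs hs' hv.le))
      · exact ht
    have hxn₁ : (H.neighborSet (x n)).ncard = 1 :=
      le_antisymm hleaf ((Set.ncard_pos).2 ⟨_, hpred⟩)
    exact ⟨x n, ⟨hxn, hxn₁⟩, n, x, hn, hx, rfl, rfl, hleaf⟩
  choose! f hf n x hn hx hx₀ hxₙ hleaf using hpath
  have hinj : Set.InjOn f {v ∈ s | (H.neighborSet v).ncard = 1} := fun v hv w hw hvw => by
    rw [← hx₀ v hv, ← hx₀ w hw]
    refine (hx v hv).apply_zero_eq_of_apply_eq hdeg (hx w hw) (hn v hv) (hn w hw) ?_ ?_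
      (hleaf v hv) (by rw [hxₙ v hv, hxₙ w hw, hvw])
    · rw [hx₀ v hv]; exact hv.2.le
    · rw [hx₀ w hw]; exact hw.2.le
  have := Set.ncard_le_ncard_of_injOn f hf hinj
  have := h.ncard_leaves_lt hdeg hs hst
  omega

end MaxDegreeTwo

end SimpleGraph

section AugmentingPath

variable {V : Type} {G : SimpleGraph V} {I S J : Set V} {v : V}

lemma ncard_nbrsIn_le_two [Finite V] (hcf : ClawFree G) (hJ : Indep G J) :
    (nbrsIn G J v).ncard ≤ 2 := by
  by_contra! h
  obtain ⟨a, ha, b, hb, c, hc, hab, hac, hbc⟩ := (Set.two_lt_ncard).1 h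
  exact hcf ⟨v, a, b, c, ha.2, hb.2, hc.2, hab, hac, hbc,
    hJ a ha.1 b hb.1, hJ a ha.1 c hc.1, hJ b hb.1 c hc.1⟩

lemma neighborSet_between_sdiff (hS : Indep G S) (hv : v ∈ S \ I) :
    (G.between (S \ I) (I \ S)).neighborSet v = nbrsIn G I v := by
  ext w
  simp only [mem_neighborSet, between_adj, nbrsIn, Set.mem_ofPred_eq, Set.mem_sdiff]
  constructor
  · rintro ⟨hadj, ⟨-, hw⟩ | ⟨hv', -⟩⟩
    · exact ⟨hw.1, hadj⟩
    · exact absurd hv'.1 hv.2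
  · rintro ⟨hwI, hadj⟩
    exact ⟨hadj, Or.inl ⟨hv, hwI, fun hwS => hS v hv.1 w hwS hadj⟩⟩

lemma ncard_neighborSet_between_sdiff_le_two [Finite V] (hcf : ClawFree G) (hI : Indep G I)
    (hS : Indep G S) (v : V) : ((G.between (S \ I) (I \ S)).neighborSet v).ncard ≤ 2 := by
  by_cases hvS : v ∈ S \ I
  · rw [neighborSet_between_sdiff hS hvS]
    exact ncard_nbrsIn_le_two hcf hI
  by_cases hvI : v ∈ I \ S
  · rw [between_comm, neighborSet_between_sdiff hI hvI]
    exact ncard_nbrsIn_le_two hcf hS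
  have : (G.between (S \ I) (I \ S)).neighborSet v = ∅ :=
    Set.eq_empty_of_forall_notMem fun w hw => by
      rcases hw.2 with ⟨h, -⟩ | ⟨h, -⟩
      exacts [hvS h, hvI h]
  simp [this]

lemma isAugPath_of_isPathSeq_between [Finite V] (hcf : ClawFree G) (hI : Indep G I)
    (hS : Indep G S) {k : ℕ} {x : ℕ → V}
    (hx : (G.between (S \ I) (I \ S)).IsPathSeq (2 * k) x)
    (hk : 1 ≤ k) (hx₀ : x 0 ∈ S \ I)
    (hleaf₀ : ((G.between (S \ I) (I \ S)).neighborSet (x 0)).ncard ≤ 1)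
    (hleafₙ : ((G.between (S \ I) (I \ S)).neighborSet (x (2 * k))).ncard ≤ 1) :
    IsAugPath G I k fun j => x j := by
  have hside := hx.mem_of_isBipartiteWith (between_isBipartiteWith disjoint_sdiff_sdiff) hx₀
  have hadj_between : ∀ i ≤ 2 * k, ∀ j ≤ 2 * k, G.Adj (x i) (x j) →
      (G.between (S \ I) (I \ S)).Adj (x i) (x j) := by
    intro i hi j hj hadj
    rcases Nat.even_or_odd i with hi' | hi' <;> rcases Nat.even_or_odd j with hj' | hj'
    · exact absurd hadj (hS _ ((hside i hi).1 hi').1 _ ((hside j hj).1 hj').1)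
    · exact ⟨hadj, Or.inl ⟨(hside i hi).1 hi', (hside j hj).2 hj'⟩⟩
    · exact ⟨hadj, Or.inr ⟨(hside i hi).2 hi', (hside j hj).1 hj'⟩⟩
    · exact absurd hadj (hI _ ((hside i hi).2 hi').1 _ ((hside j hj).2 hj').1)
  have hfree : ∀ j ≤ 2 * k, Even j →
      ((G.between (S \ I) (I \ S)).neighborSet (x j)).ncard ≤ 1 → FreeVert G I (x j) :=
    fun j hj he hleaf => ⟨((hside j hj).1 he).2,
      neighborSet_between_sdiff hS ((hside j hj).1 he) ▸ hleaf⟩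
  refine ⟨hk, fun i j h => Fin.ext (hx.eq_of_apply_eq (by omega) (by omega) h),
    fun j => (hx.adj j (by omega)).1, fun i j hadj => ?_, fun j => ?_,
    hfree 0 (by omega) Even.zero hleaf₀, ?_⟩
  · exact hx.succ_eq_or_eq_succ_of_adj (ncard_neighborSet_between_sdiff_le_two hcf hI hS)
      hleaf₀ hleafₙ (by omega) (by omega) (hadj_between i (by omega) j (by omega) hadj)
  · have hj := (hside j (by omega))
    exact ⟨fun h => Nat.not_even_iff_odd.1 fun he => (hj.1 he).2 h, fun ho => (hj.2 ho).1⟩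
  · simpa using hfree (2 * k) le_rfl (even_two_mul k) hleafₙ

end AugmentingPath

theorem stmt_13_general {V : Type} [Fintype V] (G : SimpleGraph V)
    (hcf : ClawFree G) (I : Set V) (hI : Indep G I)
    (hnonmax : ∃ S : Set V, Indep G S ∧ I.ncard < S.ncard) :
    (∃ v : V, v ∉ I ∧ ∀ u ∈ I, ¬ G.Adj v u) ∨
    (∃ (k : ℕ) (x : Fin (2*k+1) → V), IsAugPath G I k x) := by
  refine or_iff_not_imp_left.2 fun hdom => ?_
  push Not at hdom
  obtain ⟨S, hS, hcard⟩ := hnonmax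
  have hbip := between_isBipartiteWith (G := G) (disjoint_sdiff_sdiff : Disjoint (S \ I) (I \ S))
  have hpos : ∀ v ∈ S \ I, ((G.between (S \ I) (I \ S)).neighborSet v).Nonempty := by
    intro v hv
    rw [neighborSet_between_sdiff hS hv]
    obtain ⟨u, hu, hadj⟩ := hdom v hv.2
    exact ⟨u, hu, hadj⟩
  obtain ⟨n, x, hn, hx, hx₀, hxₙ, hleaf₀, hleafₙ⟩ :=
    hbip.exists_isPathSeq_of_ncard_lt (ncard_neighborSet_between_sdiff_le_two hcf hI hS) hpos
      ((Set.ncard_lt_ncard_iff_ncard_sdiff_lt_ncard_sdiff).1 hcard)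
  obtain ⟨k, rfl⟩ : 2 ∣ n := by
    refine even_iff_two_dvd.1 (Nat.not_odd_iff_even.1 fun hodd => ?_)
    exact Set.disjoint_left.1 hbip.disjoint hxₙ
      ((hx.mem_of_isBipartiteWith hbip hx₀ n le_rfl).2 hodd)
  exact ⟨k, _, isAugPath_of_isPathSeq_between hcf hI hS hx (by omega) hx₀ hleaf₀ hleafₙ⟩

/-- A non-maximum independent set in a claw-free graph is not dominating or admits an
augmenting path. -/
theorem stmt_13 {V : Type} [Fintype V] [DecidableEq V] (G : SimpleGraph V)
    (hcf : ClawFree G) (I : Set V) (hI : Indep G I)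
    (hnonmax : ∃ S : Set V, Indep G S ∧ I.ncard < S.ncard) :
    (∃ v : V, v ∉ I ∧ ∀ u ∈ I, ¬ G.Adj v u) ∨
    (∃ (k : ℕ) (x : Fin (2*k+1) → V), IsAugPath G I k x) :=
  stmt_13_general G hcf I hI hnonmax
end

section
/- Let G be a claw-free graph, I an independent set, and C an I-bad cycle with I-bipartition [A, B]. Then: (a) no vertex of G has 3 or more neighbors in B; (b) there is no edge between a vertex with exactly 2 neighbors in B and a vertex with 0 neighbors in B; (c) a vertex v satisfies v ∈ N(B) \ A if and only if v ∈ N(A) \ B; (d) N(B) ∩ I = A. -/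
/-!
A vertex `c j` of the bad cycle has its two cycle neighbours `c (j - 1)`, `c (j + 1)` in the
other part of the bipartition, and these two are non-adjacent. Hence a vertex `v` adjacent to
`c j` and outside the other part must be adjacent to `c (j - 1)` or `c (j + 1)`, or else
`v, c (j - 1), c (j + 1)` is a claw at `c j`; this gives (c) and (d). Parts (a) and (b) hold
for every independent set `B`: three neighbours in `B`, or two neighbours in `B` together with
a neighbour having none, form a claw.
-/

open SimpleGraph

theorem ZMod.even_val_add_one_iff {m : ℕ} [NeZero m] (hm : Even m) (j : ZMod m) :
    Even (j + 1).val ↔ ¬Even j.val := by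
  have : Fact (1 < m) := ⟨by obtain ⟨k, rfl⟩ := hm; have := NeZero.ne (k + k); omega⟩
  rw [ZMod.val_add, ZMod.val_one, ← Nat.even_add_one]
  rcases Nat.lt_or_eq_of_le (ZMod.val_lt j) with h | h
  · rw [Nat.mod_eq_of_lt h]
  · rw [show j.val + 1 = m from h, Nat.mod_self]
    exact iff_of_true .zero hm

theorem ZMod.even_val_sub_one_iff {m : ℕ} [NeZero m] (hm : Even m) (j : ZMod m) :
    Even (j - 1).val ↔ ¬Even j.val := by
  rw [← not_iff_not, not_not, ← ZMod.even_val_add_one_iff hm, sub_add_cancel]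

namespace ClawFree

variable {V : Type} {G : SimpleGraph V} {B : Set V}

theorem ncard_nbrsIn_le_two (hcf : ClawFree G) (hB : Indep G B) (v : V) :
    (nbrsIn G B v).ncard ≤ 2 := by
  by_contra! h
  obtain ⟨b₁, b₂, b₃, h₁, h₂, h₃, h₁₂, h₁₃, h₂₃⟩ :=
    (Set.two_lt_ncard_iff (Set.finite_of_ncard_pos (by omega))).1 h
  exact hcf ⟨v, b₁, b₂, b₃, h₁.2, h₂.2, h₃.2, h₁₂, h₁₃, h₂₃,
    hB _ h₁.1 _ h₂.1, hB _ h₁.1 _ h₃.1, hB _ h₂.1 _ h₃.1⟩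

theorem notMem_nset_zero_of_adj (hcf : ClawFree G) (hB : Indep G B) (hBfin : B.Finite)
    {u v : V} (huv : G.Adj u v) (hu : u ∈ Nset G B 2) : v ∉ Nset G B 0 := by
  rintro ⟨hvB, hv⟩
  obtain ⟨b₁, b₂, h₁₂, hu⟩ := Set.ncard_eq_two.1 hu.2
  have hb₁ : b₁ ∈ nbrsIn G B u := hu ▸ Set.mem_insert _ _
  have hb₂ : b₂ ∈ nbrsIn G B u := hu ▸ Set.mem_insert_of_mem _ rfl
  have hv : nbrsIn G B v = ∅ := (Set.ncard_eq_zero (hBfin.subset fun _ h => h.1)).1 hv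
  exact hcf ⟨u, v, b₁, b₂, huv, hb₁.2, hb₂.2, fun h => hvB (h ▸ hb₁.1),
    fun h => hvB (h ▸ hb₂.1), h₁₂, fun h => hv.subset ⟨hb₁.1, h⟩,
    fun h => hv.subset ⟨hb₂.1, h⟩, hB _ hb₁.1 _ hb₂.1⟩

end ClawFree

namespace IsBadCycle

variable {V : Type} {G : SimpleGraph V} {I : Set V} {n : ℕ} {c : ZMod (2 * n) → V}

theorem neZero (hc : IsBadCycle G I n c) : NeZero (2 * n) :=
  ⟨by have := hc.1; omega⟩

theorem mem_cycA_iff (hc : IsBadCycle G I n c) {j : ZMod (2 * n)} :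
    c j ∈ cycA c ↔ Even j.val :=
  hc.2.1.mem_set_image

theorem mem_cycB_iff (hc : IsBadCycle G I n c) {j : ZMod (2 * n)} :
    c j ∈ cycB c ↔ ¬Even j.val :=
  hc.2.1.mem_set_image

theorem finite_cycB (hc : IsBadCycle G I n c) : (cycB c).Finite :=
  have := hc.neZero
  (Set.toFinite _).image c

theorem cycA_subset (hc : IsBadCycle G I n c) : cycA c ⊆ I := by
  rintro _ ⟨j, hj, rfl⟩
  exact (hc.2.2.2.2 j).2 hj

theorem even_val_iff_not_of_adj (hc : IsBadCycle G I n c) {i j : ZMod (2 * n)}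
    (h : G.Adj (c i) (c j)) : Even i.val ↔ ¬Even j.val := by
  have := hc.neZero
  rcases hc.2.2.2.1 i j h with rfl | rfl
  · exact iff_not_comm.1 (ZMod.even_val_add_one_iff (even_two_mul n) i)
  · exact ZMod.even_val_add_one_iff (even_two_mul n) j

theorem indep_cycA (hc : IsBadCycle G I n c) : Indep G (cycA c) := by
  rintro _ ⟨i, hi, rfl⟩ _ ⟨j, hj, rfl⟩ h
  exact (hc.even_val_iff_not_of_adj h).1 hi hj

theorem indep_cycB (hc : IsBadCycle G I n c) : Indep G (cycB c) := by
  rintro _ ⟨i, hi, rfl⟩ _ ⟨j, hj, rfl⟩ h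
  exact hi ((hc.even_val_iff_not_of_adj h).2 hj)

theorem cycA_subset_nbhd_cycB (hc : IsBadCycle G I n c) : cycA c ⊆ Nbhd G (cycB c) := by
  have := hc.neZero
  rintro _ ⟨j, hj, rfl⟩
  exact ⟨c (j + 1), hc.mem_cycB_iff.2 fun h => (ZMod.even_val_add_one_iff (even_two_mul n) j).1 h hj,
    hc.2.2.1 j⟩

theorem adj_pred_or_adj_succ (hcf : ClawFree G) (hc : IsBadCycle G I n c) {v : V}
    {j : ZMod (2 * n)} (hv : G.Adj v (c j)) (h₁ : v ≠ c (j - 1)) (h₂ : v ≠ c (j + 1)) :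
    G.Adj v (c (j - 1)) ∨ G.Adj v (c (j + 1)) := by
  have := hc.neZero
  by_contra! h
  have hpred : G.Adj (c (j - 1)) (c j) := by simpa using hc.2.2.1 (j - 1)
  have hne : c (j - 1) ≠ c (j + 1) := fun he => by
    have h2 : ((2 : ℕ) : ZMod (2 * n)) = 0 := by push_cast; linear_combination -hc.2.1 he
    have := Nat.le_of_dvd two_pos ((ZMod.natCast_eq_zero_iff _ _).1 h2)
    have := hc.1
    omega
  have hnadj : ¬G.Adj (c (j - 1)) (c (j + 1)) := fun h' => by
    have := hc.even_val_iff_not_of_adj h'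
    have := ZMod.even_val_sub_one_iff (even_two_mul n) j
    have := ZMod.even_val_add_one_iff (even_two_mul n) j
    tauto
  exact hcf ⟨c j, v, c (j - 1), c (j + 1), hv.symm, hpred.symm, hc.2.2.1 j, h₁, h₂, hne,
    h.1, h.2, hnadj⟩

theorem mem_nbhd_cycA_of_adj (hcf : ClawFree G) (hc : IsBadCycle G I n c) {v b : V}
    (hb : b ∈ cycB c) (hvb : G.Adj v b) (hv : v ∉ cycA c) : v ∈ Nbhd G (cycA c) := by
  have := hc.neZero
  obtain ⟨j, hj, rfl⟩ := hb
  have hpred : c (j - 1) ∈ cycA c :=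
    hc.mem_cycA_iff.2 ((ZMod.even_val_sub_one_iff (even_two_mul n) j).2 hj)
  have hsucc : c (j + 1) ∈ cycA c :=
    hc.mem_cycA_iff.2 ((ZMod.even_val_add_one_iff (even_two_mul n) j).2 hj)
  rcases hc.adj_pred_or_adj_succ hcf hvb (fun h => hv (h ▸ hpred)) (fun h => hv (h ▸ hsucc))
    with h | h
  exacts [⟨_, hpred, h⟩, ⟨_, hsucc, h⟩]

theorem mem_nbhd_cycB_of_adj (hcf : ClawFree G) (hc : IsBadCycle G I n c) {v a : V}
    (ha : a ∈ cycA c) (hva : G.Adj v a) (hv : v ∉ cycB c) : v ∈ Nbhd G (cycB c) := by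
  have := hc.neZero
  obtain ⟨j, hj, rfl⟩ := ha
  have hpred : c (j - 1) ∈ cycB c :=
    hc.mem_cycB_iff.2 fun h => (ZMod.even_val_sub_one_iff (even_two_mul n) j).1 h hj
  have hsucc : c (j + 1) ∈ cycB c :=
    hc.mem_cycB_iff.2 fun h => (ZMod.even_val_add_one_iff (even_two_mul n) j).1 h hj
  rcases hc.adj_pred_or_adj_succ hcf hva (fun h => hv (h ▸ hpred)) (fun h => hv (h ▸ hsucc))
    with h | h
  exacts [⟨_, hpred, h⟩, ⟨_, hsucc, h⟩]

end IsBadCycle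

theorem stmt_14_general {V : Type} (G : SimpleGraph V)
    (hcf : ClawFree G) (I : Set V) (hI : Indep G I)
    (n : ℕ) (c : ZMod (2*n) → V) (hc : IsBadCycle G I n c) :
    (∀ v : V, (nbrsIn G (cycB c) v).ncard ≤ 2) ∧
    (∀ u v : V, G.Adj u v → u ∈ Nset G (cycB c) 2 → v ∉ Nset G (cycB c) 0) ∧
    (∀ v : V, v ∈ Nbhd G (cycB c) \ cycA c ↔ v ∈ Nbhd G (cycA c) \ cycB c) ∧
    (Nbhd G (cycB c) ∩ I = cycA c) := by
  have hA := hc.indep_cycA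
  have hB := hc.indep_cycB
  refine ⟨hcf.ncard_nbrsIn_le_two hB, fun u v => hcf.notMem_nset_zero_of_adj hB hc.finite_cycB,
    fun v => ⟨?_, ?_⟩, ?_⟩
  · rintro ⟨⟨b, hb, hvb⟩, hvA⟩
    exact ⟨hc.mem_nbhd_cycA_of_adj hcf hb hvb hvA, fun hvB => hB _ hvB _ hb hvb⟩
  · rintro ⟨⟨a, ha, hva⟩, hvB⟩
    exact ⟨hc.mem_nbhd_cycB_of_adj hcf ha hva hvB, fun hvA => hA _ hvA _ ha hva⟩
  · refine (Set.subset_inter hc.cycA_subset_nbhd_cycB hc.cycA_subset).antisymm' ?_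
    rintro v ⟨⟨b, hb, hvb⟩, hvI⟩
    by_contra hvA
    obtain ⟨a, ha, hva⟩ := hc.mem_nbhd_cycA_of_adj hcf hb hvb hvA
    exact hI _ hvI _ (hc.cycA_subset ha) hva

/-- Neighborhood structure of an `I`-bad cycle with `I`-bipartition `[A,B]`. -/
theorem stmt_14 {V : Type} [Fintype V] [DecidableEq V] (G : SimpleGraph V)
    (hcf : ClawFree G) (I : Set V) (hI : Indep G I)
    (n : ℕ) (c : ZMod (2*n) → V) (hc : IsBadCycle G I n c) :
    (∀ v : V, (nbrsIn G (cycB c) v).ncard ≤ 2) ∧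
    (∀ u v : V, G.Adj u v → u ∈ Nset G (cycB c) 2 → v ∉ Nset G (cycB c) 0) ∧
    (∀ v : V, v ∈ Nbhd G (cycB c) \ cycA c ↔ v ∈ Nbhd G (cycA c) \ cycB c) ∧
    (Nbhd G (cycB c) ∩ I = cycA c) :=
  stmt_14_general G hcf I hI n c hc
end
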